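/- arXiv:2103.06604 — 12 statements merged into one kernel-verified Lean document; each statement's English description precedes it below -/
import Mathlib

section
/- In a left quasigroup Q, the displacement group Dis(Q) equals the set of all products L_{x_1}^{k_1}···L_{x_n}^{k_n} with x_i ∈ Q and k_1 + ··· + k_n = 0; in particular LMlt(Q) = Dis(Q)·⟨L_a⟩ for every a ∈ Q. -/
/-- A left quasigroup: left multiplications are bijective. -/
class LQgrp (Q : Type*) where
  mul : Q → Q → Q
  ld : Q → Q → Q
  ld_mul : ∀ x y, ld x (mul x y) = y
  mul_ld : ∀ x y, mul x (ld x y) = y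

namespace LQgrp

variable {Q : Type*} [LQgrp Q]

/-- Left multiplication as a permutation. -/
def LM (a : Q) : Equiv.Perm Q := ⟨mul a, ld a, ld_mul a, mul_ld a⟩

/-- The left multiplication group. -/
def LMlt (Q : Type*) [LQgrp Q] : Subgroup (Equiv.Perm Q) :=
  Subgroup.closure (Set.range (LM : Q → Equiv.Perm Q))

/-- Subalgebras: subsets closed under both operations. -/
def IsSubalg (S : Set Q) : Prop :=
  (∀ a ∈ S, ∀ b ∈ S, mul a b ∈ S) ∧ (∀ a ∈ S, ∀ b ∈ S, ld a b ∈ S)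

/-- The subalgebra generated by a set. -/
def Sg (X : Set Q) : Set Q := ⋂₀ {S | IsSubalg S ∧ X ⊆ S}

/-- A subset is connected if the group generated by its left translations
acts transitively on it. -/
def ConnectedSet (S : Set Q) : Prop :=
  ∀ a ∈ S, ∀ b ∈ S, ∃ h ∈ Subgroup.closure ((LM : Q → Equiv.Perm Q) '' S), h a = b

/-- `Q` is connected if `LMlt Q` acts transitively. -/
def Connected (Q : Type*) [LQgrp Q] : Prop := ∀ a b : Q, ∃ h ∈ LMlt Q, h a = b

/-- `Q` is superconnected if every subalgebra is connected. -/
def Superconnected (Q : Type*) [LQgrp Q] : Prop :=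
  ∀ S : Set Q, IsSubalg S → ConnectedSet S

/-- Faithfulness of a subalgebra: distinct elements have distinct left translations. -/
def FaithfulOn (S : Set Q) : Prop :=
  ∀ a ∈ S, ∀ b ∈ S, (∀ c ∈ S, mul a c = mul b c) → a = b

/-- `Q` is superfaithful if every subalgebra is faithful. -/
def Superfaithful (Q : Type*) [LQgrp Q] : Prop :=
  ∀ S : Set Q, IsSubalg S → FaithfulOn S

/-- Latin: right multiplications are bijective. -/
def Latin (Q : Type*) [LQgrp Q] : Prop := ∀ a : Q, Function.Bijective (fun b => mul b a)

/-- The displacement group of a rack/quandle. -/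
def Dis (Q : Type*) [LQgrp Q] : Subgroup (Equiv.Perm Q) :=
  Subgroup.closure {g : Equiv.Perm Q | ∃ a b : Q, g = LM a * (LM b)⁻¹}

end LQgrp

/-- A quandle: idempotent, left distributive left quasigroup. -/
class Qdl (Q : Type*) extends LQgrp Q where
  idem : ∀ x : Q, mul x x = x
  ldist : ∀ x y z : Q, mul x (mul y z) = mul (mul x y) (mul x z)

/-- An involutory quandle. -/
class InvQdl (Q : Type*) extends Qdl Q where
  invol : ∀ x y : Q, mul x (mul x y) = y

open LQgrp

/-- The displacement group: the smallest normal subgroup of `LMlt Q`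
containing all `L_a L_b⁻¹`. -/
def Dis0 (Q : Type*) [LQgrp Q] : Subgroup (Equiv.Perm Q) :=
  Subgroup.closure
    {g : Equiv.Perm Q | ∃ h ∈ LMlt Q, ∃ a b : Q, g = h * (LM a * (LM b)⁻¹) * h⁻¹}

/-
Modulo `Dis(Q)` all left translations coincide: `L_b L_a⁻¹ ∈ Dis(Q)`, and `Dis(Q)` is normalized
by `LMlt(Q)`, so `L_b^k L_a^{-k} ∈ Dis(Q)` for every `k`. Pushing these factors to the left turns
any word `L_{x₁}^{k₁} ⋯ L_{xₙ}^{kₙ}` into `d · L_a^{k₁ + ⋯ + kₙ}` with `d ∈ Dis(Q)`. Conversely,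
the products of words of exponent sum `0` form a subgroup containing the generators
`h L_a L_b⁻¹ h⁻¹` of `Dis(Q)`.
-/

theorem Subgroup.zpow_mul_inv_zpow_mem_of_mem_normalizer {G : Type*} [Group G]
    {N : Subgroup G} {x y : G} (hy : y ∈ normalizer N) (hyx : y * x⁻¹ ∈ N) (k : ℤ) :
    y ^ k * (x ^ k)⁻¹ ∈ N := by
  have conj_mem {g n : G} (hg : g ∈ normalizer N) (hn : n ∈ N) : g * n * g⁻¹ ∈ N :=
    (mem_normalizer_iff.1 hg n).1 hn
  have hnat (n : ℕ) : y ^ n * (x ^ n)⁻¹ ∈ N := by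
    induction n with
    | zero => simp
    | succ n ih =>
      have h := mul_mem (conj_mem hy ih) hyx
      rwa [show y * (y ^ n * (x ^ n)⁻¹) * y⁻¹ * (y * x⁻¹) = y ^ (n + 1) * (x ^ (n + 1))⁻¹ by
        group] at h
  obtain ⟨n, rfl | rfl⟩ := k.eq_nat_or_neg
  · exact_mod_cast hnat n
  · have h := conj_mem (zpow_mem hy (-n)) (inv_mem (hnat n))
    rwa [show y ^ (-n : ℤ) * (y ^ n * (x ^ n)⁻¹)⁻¹ * (y ^ (-n : ℤ))⁻¹ =
      y ^ (-n : ℤ) * (x ^ (-n : ℤ))⁻¹ by group] at h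

namespace LQgrp

def invWord {α : Type*} (l : List (α × ℤ)) : List (α × ℤ) := l.reverse.map fun p => (p.1, -p.2)

@[simp]
lemma sum_map_snd_invWord {α : Type*} (l : List (α × ℤ)) :
    ((invWord l).map Prod.snd).sum = -(l.map Prod.snd).sum := by
  simp [invWord, Function.comp_def, List.sum_neg]

variable {Q : Type*} [LQgrp Q]

def wordProd (l : List (Q × ℤ)) : Equiv.Perm Q := (l.map fun p => LM p.1 ^ p.2).prod

@[simp]
lemma wordProd_nil : wordProd ([] : List (Q × ℤ)) = 1 := rfl

@[simp]
lemma wordProd_cons (p : Q × ℤ) (l : List (Q × ℤ)) :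
    wordProd (p :: l) = LM p.1 ^ p.2 * wordProd l :=
  rfl

@[simp]
lemma wordProd_append (l₁ l₂ : List (Q × ℤ)) :
    wordProd (l₁ ++ l₂) = wordProd l₁ * wordProd l₂ := by
  simp [wordProd]

@[simp]
lemma wordProd_invWord (l : List (Q × ℤ)) : wordProd (invWord l) = (wordProd l)⁻¹ := by
  simp [wordProd, invWord, List.prod_inv_reverse, Function.comp_def]

variable (Q) in
def wordSubgroup (A : AddSubgroup ℤ) : Subgroup (Equiv.Perm Q) where
  carrier := {g | ∃ l : List (Q × ℤ), (l.map Prod.snd).sum ∈ A ∧ g = wordProd l}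
  one_mem' := ⟨[], by simp, rfl⟩
  mul_mem' := by
    rintro _ _ ⟨l₁, h₁, rfl⟩ ⟨l₂, h₂, rfl⟩
    exact ⟨l₁ ++ l₂, by simpa using A.add_mem h₁ h₂, (wordProd_append l₁ l₂).symm⟩
  inv_mem' := by
    rintro _ ⟨l, h, rfl⟩
    exact ⟨invWord l, by simpa using A.neg_mem h, (wordProd_invWord l).symm⟩

lemma LM_mem_LMlt (a : Q) : LM a ∈ LMlt Q := Subgroup.subset_closure ⟨a, rfl⟩

lemma LMlt_le_wordSubgroup_top : LMlt Q ≤ wordSubgroup Q ⊤ :=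
  Subgroup.closure_le _ |>.2 <| by
    rintro _ ⟨a, rfl⟩
    exact ⟨[(a, 1)], AddSubgroup.mem_top _, by simp⟩

lemma Dis0_le_wordSubgroup_bot : Dis0 Q ≤ wordSubgroup Q ⊥ :=
  Subgroup.closure_le _ |>.2 <| by
    rintro _ ⟨h, hh, a, b, rfl⟩
    obtain ⟨l, -, rfl⟩ := LMlt_le_wordSubgroup_top hh
    exact ⟨l ++ [(a, 1), (b, -1)] ++ invWord l, by simp, by simp [mul_assoc]⟩

lemma LM_mul_inv_LM_mem_Dis0 (a b : Q) : LM a * (LM b)⁻¹ ∈ Dis0 Q :=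
  Subgroup.subset_closure ⟨1, one_mem _, a, b, by group⟩

lemma LMlt_le_normalizer_Dis0 : LMlt Q ≤ Subgroup.normalizer (Dis0 Q) :=
  Subgroup.le_normalizer_closure_iff.2 <| by
    rintro g hg _ ⟨h, hh, a, b, rfl⟩
    exact Subgroup.subset_closure ⟨g * h, mul_mem hg hh, a, b, by group⟩

lemma wordProd_mul_inv_zpow_mem_Dis0 (a : Q) (l : List (Q × ℤ)) :
    wordProd l * (LM a ^ (l.map Prod.snd).sum)⁻¹ ∈ Dis0 Q := by
  induction l with
  | nil => simp
  | cons p l ih =>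
    obtain ⟨x, k⟩ := p
    have hconj := (Subgroup.mem_normalizer_iff.1
      (LMlt_le_normalizer_Dis0 (zpow_mem (LM_mem_LMlt a) k)) _).1 ih
    have hx := Subgroup.zpow_mul_inv_zpow_mem_of_mem_normalizer
      (LMlt_le_normalizer_Dis0 (LM_mem_LMlt x)) (LM_mul_inv_LM_mem_Dis0 x a) k
    convert mul_mem hx hconj using 1
    simp only [wordProd_cons, List.map_cons, List.sum_cons, zpow_add]
    group

end LQgrp

/-- `Dis(Q)` is the set of products `L_{x₁}^{k₁} ⋯ L_{xₙ}^{kₙ}` with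
`k₁ + ⋯ + kₙ = 0`; in particular `LMlt(Q) = Dis(Q)⟨L_a⟩` for every `a`. -/
theorem stmt0 {Q : Type*} [LQgrp Q] :
    (∀ g : Equiv.Perm Q, g ∈ Dis0 Q ↔
      ∃ l : List (Q × ℤ), (l.map Prod.snd).sum = 0 ∧
        g = (l.map fun p => (LM p.1) ^ p.2).prod) ∧
    (∀ a : Q, ∀ g ∈ LMlt Q, ∃ d ∈ Dis0 Q, ∃ k : ℤ, g = d * (LM a) ^ k) := by
  refine ⟨fun g => ⟨fun hg => Dis0_le_wordSubgroup_bot hg, ?_⟩, fun a g hg => ?_⟩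
  · rintro ⟨l, hl, rfl⟩
    cases l with
    | nil => exact one_mem _
    | cons p l =>
      have h := wordProd_mul_inv_zpow_mem_Dis0 p.1 (p :: l)
      rwa [hl, zpow_zero, inv_one, mul_one] at h
  · obtain ⟨l, -, rfl⟩ := LMlt_le_wordSubgroup_top hg
    exact ⟨_, wordProd_mul_inv_zpow_mem_Dis0 a l, _, (inv_mul_cancel_right _ _).symm⟩
end

section
/- An idempotent left quasigroup Q is superfaithful if and only if the two-element projection left quasigroup 𝒫_2 is not isomorphic to any subalgebra of Q. In particular every superconnected idempotent left quasigroup is superfaithful. -/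
open LQgrp

lemma ld_of_mul {Q : Type*} [LQgrp Q] {x y z : Q} (h : mul x y = z) : ld x z = y := by
  rw [← h, ld_mul]

lemma pairSubalg {Q : Type*} [LQgrp Q] (hidem : ∀ x : Q, mul x x = x)
    {a b : Q} (h1 : mul a b = b) (h2 : mul b a = a) :
    IsSubalg ({a, b} : Set Q) := by
  constructor <;>
    · intro x hx y hy
      simp only [Set.mem_insert_iff, Set.mem_singleton_iff] at hx hy
      rcases hx with h | h <;> rcases hy with h' | h' <;> rw [h, h'] <;>
        simp [hidem, h1, h2, ld_of_mul (hidem a), ld_of_mul (hidem b),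
          ld_of_mul h1, ld_of_mul h2]

/-- an idempotent left quasigroup is superfaithful iff it has no
two-element projection subalgebra; in particular superconnected implies superfaithful. -/
theorem stmt3 {Q : Type*} [LQgrp Q] (hidem : ∀ x : Q, mul x x = x) :
    (Superfaithful Q ↔ ¬ ∃ a b : Q, a ≠ b ∧ mul a b = b ∧ mul b a = a) ∧
    (Superconnected Q → Superfaithful Q) := by
  have key : ¬ (∃ a b : Q, a ≠ b ∧ mul a b = b ∧ mul b a = a) → Superfaithful Q := by
    rintro hno S hS a ha b hb hab
    by_contra hne
    exact hno ⟨a, b, hne, by rw [hab b hb, hidem], by rw [← hab a ha, hidem]⟩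
  constructor
  · constructor
    · rintro hSF ⟨a, b, hab, h1, h2⟩
      apply hab
      refine hSF _ (pairSubalg hidem h1 h2) a (by simp) b (by simp) ?_
      rintro c (rfl|rfl) <;> simp [hidem, h1, h2]
    · exact key
  · intro hSC
    apply key
    rintro ⟨a, b, hab, h1, h2⟩
    have hS := pairSubalg hidem h1 h2
    obtain ⟨h, hmem, hha⟩ := hSC _ hS a (by simp) b (by simp)
    have : h ∈ MulAction.stabilizer (Equiv.Perm Q) a := by
      refine Subgroup.closure_le _ |>.mpr ?_ hmem
      rintro g ⟨x, hx, rfl⟩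
      show LM x • a = a
      rw [Equiv.Perm.smul_def]
      show mul x a = a
      rcases hx with h | h <;> rw [h] <;> simp [hidem, h2]
    have hfix : h a = a := MulAction.mem_stabilizer_iff.mp this
    exact hab (by rw [← hfix, hha])
end

section
/- Let Q be a left quasigroup with a congruence α such that Q/α is idempotent. If Q/α is superfaithful and every α-class [a]_α (which is a subalgebra) is superfaithful, then Q is superfaithful. -/
open LQgrp

/-- if `Q/α` is idempotent and superfaithful (here the quotient is
realized as a surjective homomorphic image `f : Q → R`) and every class of `α = ker f`
is superfaithful, then `Q` is superfaithful. -/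
theorem stmt4 {Q R : Type*} [LQgrp Q] [LQgrp R] (f : Q → R)
    (hsur : Function.Surjective f)
    (hmul : ∀ a b : Q, f (mul a b) = mul (f a) (f b))
    (hld : ∀ a b : Q, f (ld a b) = ld (f a) (f b))
    (hidem : ∀ x : R, mul x x = x)
    (hR : Superfaithful R)
    (hclass : ∀ a : Q, ∀ S ⊆ {b : Q | f b = f a}, IsSubalg S → FaithfulOn S) :
    Superfaithful Q := by
  intro S hS a ha b hb hab
  -- f '' S is a subalgebra of R
  have hfS : IsSubalg (f '' S) := by
    constructor
    · rintro _ ⟨x, hx, rfl⟩ _ ⟨y, hy, rfl⟩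
      exact ⟨mul x y, hS.1 x hx y hy, hmul x y⟩
    · rintro _ ⟨x, hx, rfl⟩ _ ⟨y, hy, rfl⟩
      exact ⟨ld x y, hS.2 x hx y hy, hld x y⟩
  -- f a = f b by faithfulness of R
  have hfa : f a = f b := by
    apply hR (f '' S) hfS (f a) ⟨a, ha, rfl⟩ (f b) ⟨b, hb, rfl⟩
    rintro _ ⟨c, hc, rfl⟩
    rw [← hmul, ← hmul, hab c hc]
  -- the intersection of S with the class of a
  set T : Set Q := {x ∈ S | f x = f a} with hT
  have hTsub : T ⊆ {b : Q | f b = f a} := fun x hx => hx.2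
  have hTalg : IsSubalg T := by
    constructor
    · rintro x ⟨hxS, hxf⟩ y ⟨hyS, hyf⟩
      exact ⟨hS.1 x hxS y hyS, by rw [hmul, hxf, hyf, hidem]⟩
    · rintro x ⟨hxS, hxf⟩ y ⟨hyS, hyf⟩
      refine ⟨hS.2 x hxS y hyS, ?_⟩
      rw [hld, hxf, hyf]
      nth_rewrite 2 [← hidem (f a)]
      exact ld_mul (f a) (f a)
  exact hclass a T hTsub hTalg a ⟨ha, rfl⟩ b ⟨hb, hfa.symm⟩
    (fun c hc => hab c hc.1)
end

section
/- If Q is a left quasigroup in which the subalgebra Sg(a,b) generated by any two elements a,b is a finite latin left quasigroup, then Q is latin. -/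
open LQgrp

namespace LQgrp
variable {Q : Type*} [LQgrp Q]

theorem isSubalg_sg' (X : Set Q) : IsSubalg (Sg X) := by
  constructor
  · intro a ha b hb
    intro S hS
    exact hS.1.1 a (ha S hS) b (hb S hS)
  · intro a ha b hb
    intro S hS
    exact hS.1.2 a (ha S hS) b (hb S hS)

theorem subset_sg' (X : Set Q) : X ⊆ Sg X := fun a ha S hS => hS.2 ha

end LQgrp


/-- if every two-generated subalgebra is a finite latin left
quasigroup, then `Q` is latin. -/
theorem stmt5 {Q : Type*} [LQgrp Q]
    (h : ∀ a b : Q, (Sg {a, b}).Finite ∧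
      ∀ c ∈ Sg {a, b}, Set.BijOn (fun y => mul y c) (Sg {a, b}) (Sg {a, b})) :
    Latin Q := by
  intro a
  constructor
  · intro x y hxy
    simp only at hxy
    obtain ⟨hSfin, hSbij⟩ := h x a
    obtain ⟨hTfin, hTbij⟩ := h y a
    have hxS : x ∈ Sg {x, a} := subset_sg' _ (by simp)
    have haS : a ∈ Sg {x, a} := subset_sg' _ (by simp)
    have hyT : y ∈ Sg {y, a} := subset_sg' _ (by simp)
    have haT : a ∈ Sg {y, a} := subset_sg' _ (by simp)
    have hS := isSubalg_sg' ({x, a} : Set Q)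
    have hT := isSubalg_sg' ({y, a} : Set Q)
    set f : ℕ → Q := fun n => (fun b => mul b a)^[n] (mul x a) with hf
    have hfs : ∀ n, f (n+1) = mul (f n) a := by
      intro n; simp [hf, Function.iterate_succ_apply']
    have hf0 : f 0 = mul x a := rfl
    have hfS : ∀ n, f n ∈ Sg {x, a} := by
      intro n; induction n with
      | zero => exact hS.1 x hxS a haS
      | succ n ih => rw [hfs]; exact hS.1 _ ih a haS
    have hfT : ∀ n, f n ∈ Sg {y, a} := by
      intro n; induction n with
      | zero => rw [hf0, hxy]; exact hT.1 y hyT a haT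
      | succ n ih => rw [hfs]; exact hT.1 _ ih a haT
    have hinjS := (hSbij a haS).injOn
    have hinjT := (hTbij a haT).injOn
    have hni : ¬ Function.Injective f := by
      intro hinj
      exact Set.infinite_range_of_injective hinj
        (hSfin.subset (Set.range_subset_iff.2 hfS))
    have back : ∀ i j, f (i+1) = f (j+1) → f i = f j := by
      intro i j hij
      refine hinjS (hfS i) (hfS j) ?_
      simpa only [← hfs] using hij
    have backk : ∀ k i j, f (i + k) = f (j + k) → f i = f j := by
      intro k
      induction k with
      | zero => intro i j hij; simpa using hij
      | succ k ih =>
        intro i j hij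
        refine ih i j (back _ _ ?_)
        exact hij
    obtain ⟨d, hd, hfd⟩ : ∃ d, 0 < d ∧ f d = f 0 := by
      simp only [Function.Injective, not_forall] at hni
      obtain ⟨i, j, hij, hne⟩ := hni
      rcases lt_or_gt_of_ne hne with hlt | hlt
      · refine ⟨j - i, by omega, ?_⟩
        have : f ((j - i) + i) = f (0 + i) := by
          rw [Nat.zero_add]
          rw [Nat.sub_add_cancel (le_of_lt hlt)]
          exact hij.symm
        exact backk i _ _ this
      · refine ⟨i - j, by omega, ?_⟩
        have : f ((i - j) + j) = f (0 + j) := by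
          rw [Nat.zero_add]
          rw [Nat.sub_add_cancel (le_of_lt hlt)]
          exact hij
        exact backk j _ _ this
    have hdm : d - 1 + 1 = d := Nat.succ_pred_eq_of_pos hd
    have key : mul (f (d-1)) a = mul x a := by
      rw [← hfs, hdm, hfd, hf0]
    have hx : x = f (d-1) := hinjS hxS (hfS (d-1)) key.symm
    have hy : y = f (d-1) := by
      refine hinjT hyT (hfT (d-1)) ?_
      show mul y a = mul (f (d-1)) a
      rw [key, hxy]
    rw [hx, hy]
  · intro z
    obtain ⟨_, hbij⟩ := h z a
    have haS : a ∈ Sg {z, a} := subset_sg' _ (by simp)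
    have hzS : z ∈ Sg {z, a} := subset_sg' _ (by simp)
    obtain ⟨b, _, hb⟩ := (hbij a haS).surjOn hzS
    exact ⟨b, hb⟩
end

section
/- A quandle Q is superfaithful if and only if Fix(L_a) = {a} for every a ∈ Q, and this holds if and only if the two-element projection quandle is not a subquandle of Q. -/
open LQgrp

section Aux

variable {Q : Type*} [Qdl Q]

/-- A projection pair defeats superfaithfulness: `{a,b}` is a subalgebra on which
both `L_a` and `L_b` act as the identity. -/
lemma not_sf_of_pair {a b : Q} (hne : a ≠ b) (hab : mul a b = b) (hba : mul b a = a) :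
    ¬ Superfaithful Q := by
  intro hsf
  have ldaa : ld a a = a := by
    have := ld_mul a a; rwa [Qdl.idem] at this
  have ldbb : ld b b = b := by
    have := ld_mul b b; rwa [Qdl.idem] at this
  have ldab : ld a b = b := by conv_lhs => rw [← hab]; rw [ld_mul]
  have ldba : ld b a = a := by conv_lhs => rw [← hba]; rw [ld_mul]
  have hsub : IsSubalg ({a, b} : Set Q) := by
    constructor <;>
    · rintro x (rfl | rfl) y (rfl | rfl) <;>
        simp_all [Qdl.idem, Set.mem_insert_iff, Set.mem_singleton_iff]
  have := hsf _ hsub a (by simp) b (by simp) ?_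
  · exact hne this
  · rintro c (rfl | rfl) <;> simp_all [Qdl.idem]

/-- If `a * b = b` with `a ≠ b`, then there is a projection pair. -/
lemma pair_of_fix {a b : Q} (hne : a ≠ b) (hab : mul a b = b) :
    ∃ x y : Q, x ≠ y ∧ mul x y = y ∧ mul y x = x := by
  by_cases hba : mul b a = a
  · exact ⟨a, b, hne, hab, hba⟩
  · set c := mul b a with hc
    -- a * c = c
    have hac : mul a c = c := by
      rw [hc, Qdl.ldist, hab, Qdl.idem]
    -- d := ld b a satisfies a * d = d
    set d := ld b a with hd
    have hbd : mul b d = a := mul_ld b a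
    have had : mul a d = d := by
      have h1 : mul a (mul b d) = mul b (mul a d) := by
        rw [Qdl.ldist, hab]
      rw [hbd, Qdl.idem] at h1
      -- h1 : a = mul b (mul a d)
      have := congrArg (ld b) h1
      rw [ld_mul] at this
      -- this : ld b a = mul a d
      rw [← hd] at this
      exact this.symm
    -- c * a = a
    have hca : mul c a = a := by
      have h2 : mul b (mul a d) = mul (mul b a) (mul b d) := Qdl.ldist b a d
      rw [had, hbd, ← hc] at h2
      exact h2.symm
    have hneca : a ≠ c := fun h => hba h.symm
    exact ⟨a, c, hneca, hac, hca⟩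

end Aux

/-- a quandle is superfaithful iff `Fix(L_a) = {a}` for every `a`,
iff it has no two-element projection subquandle. -/


theorem stmt6 {Q : Type*} [Qdl Q] :
    (Superfaithful Q ↔ ∀ a : Q, {b : Q | mul a b = b} = {a}) ∧
    (Superfaithful Q ↔ ¬ ∃ a b : Q, a ≠ b ∧ mul a b = b ∧ mul b a = a) := by
  -- three conditions
  have fix_to_sf : (∀ a : Q, {b : Q | mul a b = b} = {a}) → Superfaithful Q := by
    intro hfix S hS x hx y hy h
    have hxy : mul x y = y := by
      have := h y hy
      rw [Qdl.idem] at this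
      exact this
    have : y ∈ ({b : Q | mul x b = b} : Set Q) := hxy
    rw [hfix x] at this
    exact this.symm
  have sf_to_nopair : Superfaithful Q →
      ¬ ∃ a b : Q, a ≠ b ∧ mul a b = b ∧ mul b a = a := by
    rintro hsf ⟨a, b, hne, hab, hba⟩
    exact not_sf_of_pair hne hab hba hsf
  have nopair_to_fix : (¬ ∃ a b : Q, a ≠ b ∧ mul a b = b ∧ mul b a = a) →
      ∀ a : Q, {b : Q | mul a b = b} = {a} := by
    intro hnp a
    ext b
    simp only [Set.mem_setOf_eq, Set.mem_singleton_iff]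
    constructor
    · intro hab
      by_contra hne
      exact hnp (pair_of_fix (fun h => hne h.symm) hab)
    · rintro rfl
      exact Qdl.idem _
  constructor
  · exact ⟨fun h => nopair_to_fix (sf_to_nopair h), fix_to_sf⟩
  · exact ⟨sf_to_nopair, fun h => fix_to_sf (nopair_to_fix h)⟩
end

section
/- Let Q = 𝒬(G,H,f) be a coset quandle over a finite group G, where H ≤ Fix(f). If |H| and the order of f are coprime, then for every x ∈ G the size of the orbit of xH under left multiplication by H in Q equals the length of the orbit of x under f. -/
/-!
If `f^a(x)` and `f^(a+c)(x)` lie in the same coset of `H`, write `f^c(y) = y h` with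
`y = f^a(x)` and `h ∈ H`. Since `f` fixes `h`, iterating gives `(f^c)^n(y) = y hⁿ`; taking `n = |f|` yields
`h^|f| = 1`, and as `|h|` also divides `|H|`, coprimality forces `h = 1`. Hence the projection
`G → G ⧸ H` is injective on the `f`-orbit of `x`.
-/

lemma Subgroup.eq_one_of_pow_eq_one_of_coprime {G : Type*} [Group G] {H : Subgroup G} {h : G}
    (hmem : h ∈ H) {n : ℕ} (hn : h ^ n = 1) (hco : Nat.Coprime (Nat.card H) n) : h = 1 :=
  orderOf_eq_one_iff.mp <| Nat.eq_one_of_dvd_one <|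
    hco ▸ Nat.dvd_gcd (H.orderOf_dvd_natCard hmem) (orderOf_dvd_of_pow_eq_one hn)

namespace MulAut

variable {G : Type*} [Group G]

lemma pow_apply_eq_self {f : MulAut G} {h : G} (hf : f h = h) (n : ℕ) : (f ^ n) h = h :=
  (MulAction.stabilizer (MulAut G) h).pow_mem hf n

lemma pow_apply_eq_mul_pow {g : MulAut G} {y h : G} (hy : g y = y * h) (hh : g h = h) (n : ℕ) :
    (g ^ n) y = y * h ^ n := by
  induction n with
  | zero => simp
  | succ n ih => rw [pow_succ', mul_apply, ih, map_mul, map_pow, hy, hh, mul_assoc, pow_succ']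

lemma apply_eq_self_of_mk_apply_eq_mk {g : MulAut G} {H : Subgroup G}
    (hH : ∀ h ∈ H, g h = h) (hco : Nat.Coprime (Nat.card H) (orderOf g))
    {y : G} (hy : (QuotientGroup.mk (g y) : G ⧸ H) = QuotientGroup.mk y) : g y = y := by
  set h := y⁻¹ * g y with h_def
  have hmem : h ∈ H := QuotientGroup.eq.mp hy.symm
  have hgy : g y = y * h := by rw [h_def, mul_inv_cancel_left]
  have hpow : h ^ orderOf g = 1 := by
    simpa [pow_orderOf_eq_one] using (pow_apply_eq_mul_pow hgy (hH h hmem) (orderOf g)).symm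
  rw [hgy, Subgroup.eq_one_of_pow_eq_one_of_coprime hmem hpow hco, mul_one]

lemma injOn_mk_range_pow_apply {f : MulAut G} {H : Subgroup G}
    (hH : ∀ h ∈ H, f h = h) (hco : Nat.Coprime (Nat.card H) (orderOf f)) (x : G) :
    Set.InjOn (QuotientGroup.mk : G → G ⧸ H) (Set.range fun n : ℕ => (f ^ n) x) := by
  suffices key : ∀ a c : ℕ, (QuotientGroup.mk ((f ^ (a + c)) x) : G ⧸ H) =
      QuotientGroup.mk ((f ^ a) x) → (f ^ (a + c)) x = (f ^ a) x by
    rintro _ ⟨a, rfl⟩ _ ⟨b, rfl⟩ hab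
    rcases le_total a b with hle | hle
    · obtain ⟨c, rfl⟩ := Nat.exists_eq_add_of_le hle
      exact (key a c hab.symm).symm
    · obtain ⟨c, rfl⟩ := Nat.exists_eq_add_of_le hle
      exact key b c hab
  intro a c hac
  rw [add_comm, pow_add, mul_apply] at hac ⊢
  exact apply_eq_self_of_mk_apply_eq_mk (fun h hh => pow_apply_eq_self (hH h hh) c)
    (hco.coprime_dvd_right (orderOf_pow_dvd c)) hac

end MulAut

theorem stmt7_general {G : Type*} [Group G] (f : MulAut G) (H : Subgroup G)
    (hH : ∀ h ∈ H, f h = h)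
    (hco : Nat.Coprime (Nat.card H) (orderOf f)) (x : G) :
    Nat.card (Set.range fun n : ℕ => (f ^ n) x) =
      Nat.card (Set.range fun n : ℕ => (QuotientGroup.mk ((f ^ n) x) : G ⧸ H)) := by
  rw [Set.range_comp', Nat.card_coe_set_eq, Nat.card_coe_set_eq,
    (MulAut.injOn_mk_range_pow_apply hH hco x).ncard_image]

/-- in the coset quandle `𝒬(G,H,f)` over a finite group `G` with
`H ≤ Fix f`, if `|H|` and `|f|` are coprime then the orbit of `xH` under `L_H`
(which is `{f^n(x)H : n ∈ ℕ}`) has the same size as the orbit `{f^n(x) : n ∈ ℕ}`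
of `x` under `f`. -/
theorem stmt7 {G : Type*} [Group G] [Finite G] (f : MulAut G) (H : Subgroup G)
    (hH : ∀ h ∈ H, f h = h)
    (hco : Nat.Coprime (Nat.card H) (orderOf f)) (x : G) :
    Nat.card (Set.range fun n : ℕ => (f ^ n) x) =
      Nat.card (Set.range fun n : ℕ => (QuotientGroup.mk ((f ^ n) x) : G ⧸ H)) :=
  stmt7_general f H hH hco x
end

section
/- Let G be a finite group, f ∈ Aut(G), and Q = 𝒬(G, Fix(f), f). If |Fix(f)| and the order of f are coprime, then Q is superfaithful. -/
/-- The subgroup of fixed points of an automorphism. -/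
def fixSub {G : Type*} [Group G] (f : MulAut G) : Subgroup G where
  carrier := {a | f a = a}
  one_mem' := map_one f
  mul_mem' := by
    intro a b ha hb
    simp only [Set.mem_setOf_eq] at *
    rw [map_mul, ha, hb]
  inv_mem' := by
    intro a ha
    simp only [Set.mem_setOf_eq] at *
    rw [map_inv, ha]

/-- the coset quandle `𝒬(G, Fix f, f)` over a finite group, with
`|Fix f|` coprime to `|f|`, is superfaithful, i.e. `Fix(L_{xH}) = {xH}` for
every coset `xH` (the operation being `xH * yH = x f(x⁻¹ y) H`). -/
theorem stmt8 {G : Type*} [Group G] [Finite G] (f : MulAut G)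
    (hco : Nat.Coprime (Nat.card (fixSub f)) (orderOf f)) :
    ∀ x y : G,
      (QuotientGroup.mk (x * f (x⁻¹ * y)) : G ⧸ fixSub f) = QuotientGroup.mk y →
      (QuotientGroup.mk y : G ⧸ fixSub f) = QuotientGroup.mk x := by
  intro x y hxy
  rw [QuotientGroup.eq] at hxy ⊢
  set z := x⁻¹ * y with hz
  set h0 := (f z)⁻¹ * z with hh0
  have hmem : h0 ∈ fixSub f := by
    have he : (x * f z)⁻¹ * y = h0 := by
      rw [hh0, hz, mul_inv_rev, mul_assoc]
    rwa [he] at hxy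
  have hfixh : f h0 = h0 := hmem
  have hzrec : f z * h0 = z := by
    rw [hh0, ← mul_assoc, mul_inv_cancel, one_mul]
  have hpowfix : ∀ k : ℕ, (f ^ k) h0 = h0 := by
    intro k
    induction k with
    | zero => rfl
    | succ k ih => rw [pow_succ, MulAut.mul_apply, hfixh, ih]
  have key : ∀ k : ℕ, z = (f ^ k) z * h0 ^ k := by
    intro k
    induction k with
    | zero => simp
    | succ k ih =>
      have : (f ^ k) z = (f ^ (k + 1)) z * h0 := by
        conv_lhs => rw [← hzrec]
        rw [map_mul, hpowfix, pow_succ, MulAut.mul_apply]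
      calc z = (f ^ k) z * h0 ^ k := ih
        _ = ((f ^ (k + 1)) z * h0) * h0 ^ k := by rw [this]
        _ = (f ^ (k + 1)) z * h0 ^ (k + 1) := by rw [mul_assoc, ← pow_succ']
  have hn : h0 ^ (orderOf f) = 1 := by
    have := key (orderOf f)
    rw [pow_orderOf_eq_one f] at this
    simp only [MulAut.one_apply] at this
    exact (mul_left_cancel (a := z) (by rw [mul_one, ← this])).symm
  have hd1 : orderOf h0 ∣ orderOf f := orderOf_dvd_of_pow_eq_one hn
  have hd2 : orderOf h0 ∣ Nat.card (fixSub f) := by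
    have : orderOf (⟨h0, hmem⟩ : fixSub f) ∣ Nat.card (fixSub f) :=
      orderOf_dvd_natCard _
    rwa [← orderOf_submonoid] at this
  have h1 : orderOf h0 = 1 :=
    Nat.eq_one_of_dvd_coprimes hco hd2 hd1
  have hh1 : h0 = 1 := orderOf_eq_one_iff.mp h1
  have hzfix : f z = z := by
    have := hzrec
    rw [hh1, mul_one] at this
    exact this
  have hzmem : z ∈ fixSub f := hzfix
  have : y⁻¹ * x = z⁻¹ := by rw [hz]; group
  rw [this]
  exact inv_mem hzmem
end

section
/- Let G be a group, θ ∈ Aut(G), t ∈ ℕ, and let θ_t ∈ Aut(G^t) be defined by θ_t(x_1,…,x_t) = (θ(x_t), x_1, …, x_{t-1}), with H_t = Fix(θ_t) = {(a,…,a) : a ∈ Fix(θ)}. In the coset quandle 𝒬(G^t, H_t, θ_t), the fixed points of L_{H_t} are exactly the cosets (b, ba, ba², …, ba^{t-1})H_t where a ∈ Fix(θ), b ∈ G, and θ(b) = b a^{-t}. -/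
/-- The shift automorphism `θ_t(x₁,…,x_t) = (θ(x_t), x₁, …, x_{t-1})` on `G^t`,
as a function. -/
def thetaT {G : Type*} [Group G] (θ : MulAut G) (t : ℕ) (x : Fin t → G) : Fin t → G :=
  fun i =>
    if (i : ℕ) = 0 then θ (x ⟨t - 1, Nat.sub_lt i.pos Nat.one_pos⟩)
    else x ⟨(i : ℕ) - 1, lt_of_le_of_lt (Nat.pred_le _) i.isLt⟩

/-- `H_t = Fix(θ_t)`, a subgroup of `G^t`. -/
def Ht {G : Type*} [Group G] (θ : MulAut G) (t : ℕ) : Subgroup (Fin t → G) where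
  carrier := {x | thetaT θ t x = x}
  one_mem' := by
    funext i
    by_cases h : (i : ℕ) = 0 <;> simp [thetaT, h]
  mul_mem' := by
    intro a b ha hb
    simp only [Set.mem_setOf_eq] at *
    funext i
    by_cases h : (i : ℕ) = 0 <;>
      simp only [thetaT, Pi.mul_apply, h, if_true, if_false, map_mul] <;>
      rw [← congrFun ha i, ← congrFun hb i] <;> simp [thetaT, h]
  inv_mem' := by
    intro a ha
    simp only [Set.mem_setOf_eq] at *
    funext i
    by_cases h : (i : ℕ) = 0 <;>
      simp only [thetaT, Pi.inv_apply, h, if_true, if_false, map_inv] <;>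
      rw [← congrFun ha i] <;> simp [thetaT, h]

lemma mem_Ht_def {G : Type*} [Group G] (θ : MulAut G) (t : ℕ) (y : Fin t → G) :
    y ∈ Ht θ t ↔ thetaT θ t y = y := Iff.rfl

/-- Elements of `Ht` are exactly constant tuples with value fixed by `θ`. -/
lemma mem_Ht_iff {G : Type*} [Group G] (θ : MulAut G) (t : ℕ) (y : Fin t → G) :
    y ∈ Ht θ t ↔ ∃ c : G, θ c = c ∧ y = fun _ => c := by
  rw [mem_Ht_def]
  constructor
  · intro h
    cases t with
    | zero => exact ⟨1, map_one θ, funext fun i => i.elim0⟩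
    | succ n =>
      set c := y ⟨0, Nat.succ_pos n⟩ with hc
      have hconst : ∀ k, ∀ hk : k < n + 1, y ⟨k, hk⟩ = c := by
        intro k
        induction k with
        | zero => intro hk; rfl
        | succ m ih =>
          intro hk
          have h1 := congrFun h ⟨m + 1, hk⟩
          simp only [thetaT] at h1
          rw [if_neg (Nat.succ_ne_zero m)] at h1
          simp only [Nat.add_sub_cancel] at h1
          rw [← h1]
          exact ih (Nat.lt_of_succ_lt hk)
      have hfix : θ c = c := by
        have h0 := congrFun h ⟨0, Nat.succ_pos n⟩
        simp only [thetaT, if_pos, Nat.add_sub_cancel] at h0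
        rw [hconst n (Nat.lt_succ_self n)] at h0
        exact h0
      exact ⟨c, hfix, funext fun i => hconst i.1 i.2⟩
  · rintro ⟨c, hc, rfl⟩
    funext i
    by_cases h : (i : ℕ) = 0 <;> simp [thetaT, h, hc]

/-- in the coset quandle `𝒬(G^t, H_t, θ_t)`, the fixed points of
`L_{H_t}` (i.e. the cosets `xH_t` with `θ_t(x)H_t = xH_t`) are exactly the cosets
`(b, ba, ba², …, ba^{t-1})H_t` with `a ∈ Fix θ`, `b ∈ G` and `θ(b) = b a^{-t}`. -/
theorem stmt9 {G : Type*} [Group G] (θ : MulAut G) (t : ℕ) (x : Fin t → G) :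
    (QuotientGroup.mk (thetaT θ t x) : (Fin t → G) ⧸ Ht θ t) = QuotientGroup.mk x ↔
    ∃ b a : G, θ a = a ∧ θ b = b * (a ^ t)⁻¹ ∧
      (QuotientGroup.mk x : (Fin t → G) ⧸ Ht θ t) =
        QuotientGroup.mk (fun i : Fin t => b * a ^ (i : ℕ)) := by
  rw [QuotientGroup.eq, mem_Ht_iff]
  constructor
  · rintro ⟨c, hc, heq⟩
    cases t with
    | zero =>
      refine ⟨1, 1, map_one θ, by simp, ?_⟩
      congr 1
      exact funext fun i => i.elim0
    | succ n =>
      set b := x ⟨0, Nat.succ_pos n⟩ with hb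
      have hx : ∀ k, ∀ hk : k < n + 1, x ⟨k, hk⟩ = b * c ^ k := by
        intro k
        induction k with
        | zero => intro hk; simp [hb]
        | succ m ih =>
          intro hk
          have h1 := congrFun heq ⟨m + 1, hk⟩
          simp only [Pi.mul_apply, Pi.inv_apply, thetaT] at h1
          rw [if_neg (Nat.succ_ne_zero m)] at h1
          simp only [Nat.add_sub_cancel] at h1
          have h2 : x ⟨m + 1, hk⟩ = x ⟨m, Nat.lt_of_succ_lt hk⟩ * c := by
            rw [← h1]; group
          rw [h2, ih (Nat.lt_of_succ_lt hk), pow_succ, mul_assoc]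
      have hθb : θ b = b * (c ^ (n + 1))⁻¹ := by
        have h0 := congrFun heq ⟨0, Nat.succ_pos n⟩
        simp only [Pi.mul_apply, Pi.inv_apply, thetaT, if_pos, Nat.add_sub_cancel] at h0
        rw [hx n (Nat.lt_succ_self n)] at h0
        have hθ : θ (b * c ^ n) = θ b * c ^ n := by
          rw [map_mul, map_pow, hc]
        rw [hθ, ← hb, inv_mul_eq_iff_eq_mul] at h0
        rw [pow_succ, mul_inv_rev]
        conv_rhs => rw [h0]
        group
      refine ⟨b, c, hc, hθb, ?_⟩
      congr 1
      exact funext fun i => hx i.1 i.2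
  · rintro ⟨b, a, ha, hθb, hx⟩
    rw [QuotientGroup.eq, mem_Ht_iff] at hx
    obtain ⟨c, hc, heq⟩ := hx
    cases t with
    | zero =>
      refine ⟨1, map_one θ, funext fun i => i.elim0⟩
    | succ n =>
      have hxval : ∀ k, ∀ hk : k < n + 1, x ⟨k, hk⟩ = b * a ^ k * c⁻¹ := by
        intro k hk
        have h1 := congrFun heq ⟨k, hk⟩
        simp only [Pi.mul_apply, Pi.inv_apply] at h1
        rw [← h1]
        group
      refine ⟨c * a * c⁻¹, by rw [map_mul, map_mul, map_inv, hc, ha], ?_⟩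
      funext i
      rcases i with ⟨k, hk⟩
      simp only [Pi.mul_apply, Pi.inv_apply, thetaT]
      by_cases h : k = 0
      · subst h
        rw [if_pos rfl]
        simp only [Nat.add_sub_cancel]
        rw [hxval n (Nat.lt_succ_self n), hxval 0 (Nat.succ_pos n)]
        rw [map_mul, map_mul, map_inv, map_pow, ha, hc, hθb]
        rw [pow_succ, pow_zero]
        group
      · rw [if_neg h]
        obtain ⟨m, rfl⟩ := Nat.exists_eq_succ_of_ne_zero h
        show (x ⟨m, Nat.lt_of_succ_lt hk⟩)⁻¹ * x ⟨m + 1, hk⟩ = c * a * c⁻¹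
        rw [hxval (m + 1) hk, hxval m (Nat.lt_of_succ_lt hk), pow_succ]
        group
end

section
/- Let Q be an involutory quandle generated by two elements a and b. Then the displacement group Dis(Q) is the cyclic group generated by L_a L_b. -/
open LQgrp

section Aux

variable {Q : Type*} [InvQdl Q]

lemma aux_LM_sq (x : Q) : LM x * LM x = 1 := by
  ext y
  exact InvQdl.invol x y

lemma aux_LM_inv (x : Q) : (LM x)⁻¹ = LM x :=
  inv_eq_of_mul_eq_one_right (aux_LM_sq x)

lemma aux_ld_eq (x y : Q) : LQgrp.ld x y = LQgrp.mul x y := by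
  have h := LQgrp.ld_mul x (LQgrp.mul x y)
  rwa [InvQdl.invol x y] at h

lemma aux_LM_conj (x y : Q) : LM (LQgrp.mul x y) = LM x * LM y * LM x := by
  ext z
  show LQgrp.mul (LQgrp.mul x y) z = LQgrp.mul x (LQgrp.mul y (LQgrp.mul x z))
  rw [Qdl.ldist x y (LQgrp.mul x z), InvQdl.invol x z]

lemma aux_cancel (x : Q) (g : Equiv.Perm Q) : LM x * (LM x * g) = g := by
  rw [← mul_assoc, aux_LM_sq, one_mul]

end Aux

/-- if an involutory quandle is generated by `a` and `b`, then its
displacement group is the cyclic group generated by `L_a L_b`. -/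
theorem stmt14 {Q : Type*} [InvQdl Q] (a b : Q) (hgen : Sg {a, b} = (Set.univ : Set Q)) :
    Dis Q = Subgroup.zpowers (LM a * LM b) := by
  set Z := Subgroup.zpowers (LM a * LM b) with hZ
  -- T : the set of x with L_a L_x ∈ Z
  set T : Set Q := {x | LM a * LM x ∈ Z} with hT
  have ha : a ∈ T := by
    show LM a * LM a ∈ Z
    rw [aux_LM_sq]; exact one_mem Z
  have hb : b ∈ T := Subgroup.mem_zpowers _
  have hclosed : ∀ x ∈ T, ∀ y ∈ T, LQgrp.mul x y ∈ T := by
    intro x hx y hy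
    show LM a * LM (LQgrp.mul x y) ∈ Z
    have key : LM a * LM (LQgrp.mul x y)
        = (LM a * LM x) * ((LM a * LM y)⁻¹ * (LM a * LM x)) := by
      rw [aux_LM_conj, mul_inv_rev, aux_LM_inv, aux_LM_inv]
      simp only [mul_assoc, aux_cancel]
    rw [key]
    exact mul_mem hx (mul_mem (inv_mem hy) hx)
  have hsub : IsSubalg T := by
    refine ⟨hclosed, ?_⟩
    intro x hx y hy
    rw [aux_ld_eq]
    exact hclosed x hx y hy
  have hTuniv : ∀ x : Q, x ∈ T := by
    intro x
    have h1 : Sg {a, b} ⊆ T := by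
      apply Set.sInter_subset_of_mem
      refine ⟨hsub, ?_⟩
      intro z hz
      rcases hz with rfl | hz
      · exact ha
      · rcases hz with rfl; exact hb
    rw [hgen] at h1
    exact h1 (Set.mem_univ x)
  -- every L_x L_y is in Z
  have hxy : ∀ x y : Q, LM x * LM y ∈ Z := by
    intro x y
    have key : LM x * LM y = (LM a * LM x)⁻¹ * (LM a * LM y) := by
      rw [mul_inv_rev, aux_LM_inv, aux_LM_inv]
      simp only [mul_assoc, aux_cancel]
    rw [key]
    exact mul_mem (inv_mem (hTuniv x)) (hTuniv y)
  apply le_antisymm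
  · rw [LQgrp.Dis, Subgroup.closure_le]
    rintro g ⟨x, y, rfl⟩
    rw [aux_LM_inv]
    exact hxy x y
  · rw [Subgroup.zpowers_le]
    apply Subgroup.subset_closure
    exact ⟨a, b, by rw [aux_LM_inv]⟩
end

section
/- Let Q be an involutory quandle and a,b ∈ Q. The following are equivalent: (i) L_a L_b has finite order in Sym(Q); (ii) the subquandle Sg(a,b) generated by a and b is finite; (iii) there exists k > 0 with a^k = b, where a^{2i} = (L_a L_b)^i(b) and a^{2i+1} = (L_a L_b)^i(a). -/
open LQgrp

/-- The cycle element `a^k`: `a^{2i} = (L_a L_b)^i(b)` and `a^{2i+1} = (L_a L_b)^i(a)`. -/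
def cyc {Q : Type*} [LQgrp Q] (a b : Q) (k : ℕ) : Q :=
  if k % 2 = 0 then ((LM a * LM b) ^ (k / 2)) b else ((LM a * LM b) ^ (k / 2)) a

namespace Stmt16Aux

variable {Q : Type*} [InvQdl Q]

lemma LM_apply (x y : Q) : (LM x) y = LQgrp.mul x y := rfl

lemma LM_invol (x : Q) : (LM x : Equiv.Perm Q) * LM x = 1 := by
  ext y
  simp [Equiv.Perm.mul_apply, LM_apply, InvQdl.invol]

lemma LM_inv (x : Q) : (LM x : Equiv.Perm Q)⁻¹ = LM x := by
  rw [inv_eq_iff_mul_eq_one, LM_invol]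

lemma ld_eq_mul (x y : Q) : LQgrp.ld x y = LQgrp.mul x y := by
  conv_lhs => rw [← InvQdl.invol x y]
  rw [LQgrp.ld_mul]

lemma LM_mul (x y : Q) : (LM (LQgrp.mul x y) : Equiv.Perm Q) = LM x * LM y * LM x := by
  ext z
  show LQgrp.mul (LQgrp.mul x y) z = LQgrp.mul x (LQgrp.mul y (LQgrp.mul x z))
  rw [Qdl.ldist x y (LQgrp.mul x z), InvQdl.invol]

/-- conjugation by `LM a` inverts `g = LM a * LM b`. -/
lemma conj_g_a (x y : Q) :
    (LM x : Equiv.Perm Q) * (LM x * LM y) * (LM x)⁻¹ = (LM x * LM y)⁻¹ := by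
  rw [mul_inv_rev, LM_inv, LM_inv, ← mul_assoc, LM_invol, one_mul]

lemma conj_g_b (x y : Q) :
    (LM y : Equiv.Perm Q) * (LM x * LM y) * (LM y)⁻¹ = (LM x * LM y)⁻¹ := by
  rw [mul_inv_rev, LM_inv, LM_inv]
  rw [mul_assoc, mul_assoc, LM_invol, mul_one]

/-- `LM ((g)^n x) = g^n * LM x * g^{-n}` for natural `n`. -/
lemma LM_conj_pow (x y : Q) (n : ℕ) (z : Q) :
    (LM (((LM x * LM y : Equiv.Perm Q) ^ n) z) : Equiv.Perm Q)
      = (LM x * LM y) ^ n * LM z * ((LM x * LM y) ^ n)⁻¹ := by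
  induction n with
  | zero => simp
  | succ n ih =>
    have hstep : ((LM x * LM y : Equiv.Perm Q) ^ (n+1)) z
        = LQgrp.mul x (LQgrp.mul y (((LM x * LM y : Equiv.Perm Q) ^ n) z)) := by
      rw [pow_succ']
      rfl
    rw [hstep, LM_mul, LM_mul, ih]
    have hinv : (LM y : Equiv.Perm Q) * LM x = (LM x * LM y)⁻¹ := by
      rw [mul_inv_rev, LM_inv, LM_inv]
    calc (LM x : Equiv.Perm Q) * ((LM y) * ((LM x * LM y) ^ n * LM z * ((LM x * LM y) ^ n)⁻¹) * (LM y)) * (LM x)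
        = (LM x * LM y) * (LM x * LM y) ^ n * LM z * ((LM x * LM y) ^ n)⁻¹ * (LM y * LM x) := by
          group
      _ = (LM x * LM y) * (LM x * LM y) ^ n * LM z * ((LM x * LM y) * (LM x * LM y) ^ n)⁻¹ := by
          rw [hinv, mul_inv_rev (LM x * LM y : Equiv.Perm Q) ((LM x * LM y) ^ n)]
          simp [mul_assoc]
      _ = (LM x * LM y) ^ (n+1) * LM z * ((LM x * LM y) ^ (n+1))⁻¹ := by rw [pow_succ']

lemma LM_conj_zpow (x y : Q) (n : ℤ) (z : Q) :
    (LM (((LM x * LM y : Equiv.Perm Q) ^ n) z) : Equiv.Perm Q)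
      = (LM x * LM y) ^ n * LM z * ((LM x * LM y) ^ n)⁻¹ := by
  obtain ⟨m, rfl | rfl⟩ := Int.eq_nat_or_neg n
  · rw [zpow_natCast]; exact LM_conj_pow x y m z
  · have hinv : ((LM x * LM y : Equiv.Perm Q))⁻¹ = LM y * LM x := by
      rw [mul_inv_rev, LM_inv, LM_inv]
    rw [zpow_neg, zpow_natCast, ← inv_pow, hinv]
    exact LM_conj_pow y x m z


lemma pow_conj_a (x y : Q) (n : ℤ) :
    (LM x : Equiv.Perm Q) * (LM x * LM y) ^ n = (LM x * LM y) ^ (-n) * LM x := by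
  have h : ((LM x : Equiv.Perm Q) * (LM x * LM y) * (LM x)⁻¹) ^ n
      = (LM x) * (LM x * LM y) ^ n * (LM x)⁻¹ := conj_zpow
  rw [conj_g_a, inv_zpow, ← zpow_neg] at h
  rw [h]
  group

lemma pow_conj_b (x y : Q) (n : ℤ) :
    (LM y : Equiv.Perm Q) * (LM x * LM y) ^ n = (LM x * LM y) ^ (-n) * LM y := by
  have h : ((LM y : Equiv.Perm Q) * (LM x * LM y) * (LM y)⁻¹) ^ n
      = (LM y) * (LM x * LM y) ^ n * (LM y)⁻¹ := conj_zpow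
  rw [conj_g_b, inv_zpow, ← zpow_neg] at h
  rw [h]
  group

lemma pow_conj_b_nat (x y : Q) (n : ℕ) :
    (LM y : Equiv.Perm Q) * (LM x * LM y) ^ n * (LM y)⁻¹ = ((LM x * LM y) ^ n)⁻¹ := by
  have h : ((LM y : Equiv.Perm Q) * (LM x * LM y) * (LM y)⁻¹) ^ n
      = (LM y) * (LM x * LM y) ^ n * (LM y)⁻¹ := conj_pow
  rw [conj_g_b, inv_pow] at h
  exact h.symm

lemma pow_conj_a_nat (x y : Q) (n : ℕ) :
    (LM x : Equiv.Perm Q) * (LM x * LM y) ^ n * (LM x)⁻¹ = ((LM x * LM y) ^ n)⁻¹ := by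
  have h : ((LM x : Equiv.Perm Q) * (LM x * LM y) * (LM x)⁻¹) ^ n
      = (LM x) * (LM x * LM y) ^ n * (LM x)⁻¹ := conj_pow
  rw [conj_g_a, inv_pow] at h
  exact h.symm

/-- If `g^n` fixes `b`, then `g^(2n) = 1`. -/
lemma ordA (x y : Q) (n : ℕ) (h : (((LM x * LM y : Equiv.Perm Q)) ^ n) y = y) :
    ((LM x * LM y : Equiv.Perm Q)) ^ (2 * n) = 1 := by
  have h1 : ((LM x * LM y : Equiv.Perm Q)) ^ n * LM y * (((LM x * LM y)) ^ n)⁻¹ = LM y := by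
    rw [← LM_conj_pow x y n y, h]
  rw [mul_inv_eq_iff_eq_mul] at h1
  have h2 := pow_conj_b_nat x y n
  rw [← h1, mul_inv_cancel_right] at h2
  rw [two_mul, pow_add]
  exact mul_eq_one_iff_inv_eq.mpr h2.symm

/-- If `g^n` maps `a` to `b`, then `g^(2n+1) = 1`. -/
lemma ordB (x y : Q) (n : ℕ) (h : (((LM x * LM y : Equiv.Perm Q)) ^ n) x = y) :
    ((LM x * LM y : Equiv.Perm Q)) ^ (2 * n + 1) = 1 := by
  have h1 : ((LM x * LM y : Equiv.Perm Q)) ^ n * LM x * (((LM x * LM y)) ^ n)⁻¹ = LM y := by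
    rw [← LM_conj_pow x y n x, h]
  have h2 := pow_conj_a_nat x y n
  have hgeq : (LM x * LM y : Equiv.Perm Q)
      = (((LM x * LM y) ^ n)⁻¹) * (((LM x * LM y) ^ n)⁻¹) := by
    calc (LM x * LM y : Equiv.Perm Q)
        = LM x * ((LM x * LM y) ^ n * LM x * ((LM x * LM y) ^ n)⁻¹) := by rw [h1]
      _ = (LM x * (LM x * LM y) ^ n * (LM x)⁻¹) * ((LM x * LM y) ^ n)⁻¹ := by
          rw [LM_inv]; group
      _ = (((LM x * LM y) ^ n)⁻¹) * (((LM x * LM y) ^ n)⁻¹) := by rw [h2]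
  calc ((LM x * LM y : Equiv.Perm Q)) ^ (2 * n + 1)
      = (LM x * LM y) ^ n * (LM x * LM y) ^ n * (LM x * LM y) := by
        rw [pow_succ, two_mul, pow_add]
    _ = (LM x * LM y) ^ n * (LM x * LM y) ^ n
        * ((((LM x * LM y) ^ n)⁻¹) * (((LM x * LM y) ^ n)⁻¹)) := by rw [← hgeq]
    _ = 1 := by group


/-- The candidate generated set: orbits of `a` and `b` under powers of `L_a L_b`. -/
def Tset (a b : Q) : Set Q :=
  {x | ∃ n : ℤ, x = (((LM a * LM b : Equiv.Perm Q)) ^ n) a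
      ∨ x = (((LM a * LM b : Equiv.Perm Q)) ^ n) b}

lemma mem_Tset {a b x : Q} :
    x ∈ Tset a b ↔ ∃ n : ℤ, x = (((LM a * LM b : Equiv.Perm Q)) ^ n) a
      ∨ x = (((LM a * LM b : Equiv.Perm Q)) ^ n) b := Iff.rfl

lemma a_mem_Tset (a b : Q) : a ∈ Tset a b := ⟨0, Or.inl (by simp)⟩
lemma b_mem_Tset (a b : Q) : b ∈ Tset a b := ⟨0, Or.inr (by simp)⟩

lemma zpow_mem_Tset (a b : Q) (m : ℤ) {x : Q} (hx : x ∈ Tset a b) :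
    (((LM a * LM b : Equiv.Perm Q)) ^ m) x ∈ Tset a b := by
  obtain ⟨n, rfl | rfl⟩ := hx
  · exact ⟨m + n, Or.inl (by rw [zpow_add]; rfl)⟩
  · exact ⟨m + n, Or.inr (by rw [zpow_add]; rfl)⟩

lemma mul_ab (a b : Q) :
    LQgrp.mul a b = ((LM a * LM b : Equiv.Perm Q)) b := by
  show LQgrp.mul a b = (LM a) ((LM b) b)
  rw [LM_apply, LM_apply, Qdl.idem]

lemma mul_ba (a b : Q) :
    LQgrp.mul b a = (((LM a * LM b : Equiv.Perm Q))⁻¹) a := by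
  rw [mul_inv_rev, LM_inv, LM_inv]
  show LQgrp.mul b a = (LM b) ((LM a) a)
  rw [LM_apply, LM_apply, Qdl.idem]

lemma mulA_mem_Tset (a b : Q) {x : Q} (hx : x ∈ Tset a b) :
    LQgrp.mul a x ∈ Tset a b := by
  obtain ⟨n, rfl | rfl⟩ := hx
  · have e : LQgrp.mul a ((((LM a * LM b : Equiv.Perm Q)) ^ n) a)
        = (((LM a * LM b : Equiv.Perm Q)) ^ (-n)) a := by
      calc LQgrp.mul a ((((LM a * LM b : Equiv.Perm Q)) ^ n) a)
          = ((LM a * (LM a * LM b) ^ n : Equiv.Perm Q)) a := rfl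
        _ = (((LM a * LM b) ^ (-n) * LM a : Equiv.Perm Q)) a := by rw [pow_conj_a]
        _ = (((LM a * LM b) ^ (-n) : Equiv.Perm Q)) (LQgrp.mul a a) := rfl
        _ = (((LM a * LM b) ^ (-n) : Equiv.Perm Q)) a := by rw [Qdl.idem]
    rw [e]; exact ⟨-n, Or.inl rfl⟩
  · have e : LQgrp.mul a ((((LM a * LM b : Equiv.Perm Q)) ^ n) b)
        = (((LM a * LM b : Equiv.Perm Q)) ^ (-n + 1)) b := by
      calc LQgrp.mul a ((((LM a * LM b : Equiv.Perm Q)) ^ n) b)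
          = ((LM a * (LM a * LM b) ^ n : Equiv.Perm Q)) b := rfl
        _ = (((LM a * LM b) ^ (-n) * LM a : Equiv.Perm Q)) b := by rw [pow_conj_a]
        _ = (((LM a * LM b) ^ (-n) : Equiv.Perm Q)) (LQgrp.mul a b) := rfl
        _ = (((LM a * LM b) ^ (-n) : Equiv.Perm Q))
              ((((LM a * LM b : Equiv.Perm Q)) ^ (1 : ℤ)) b) := by rw [mul_ab, zpow_one]
        _ = (((LM a * LM b) ^ (-n) * (LM a * LM b) ^ (1:ℤ) : Equiv.Perm Q)) b := rfl
        _ = (((LM a * LM b : Equiv.Perm Q)) ^ (-n + 1)) b := by rw [← zpow_add]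
    rw [e]; exact ⟨-n + 1, Or.inr rfl⟩

lemma mulB_mem_Tset (a b : Q) {x : Q} (hx : x ∈ Tset a b) :
    LQgrp.mul b x ∈ Tset a b := by
  obtain ⟨n, rfl | rfl⟩ := hx
  · have e : LQgrp.mul b ((((LM a * LM b : Equiv.Perm Q)) ^ n) a)
        = (((LM a * LM b : Equiv.Perm Q)) ^ (-n + -1)) a := by
      calc LQgrp.mul b ((((LM a * LM b : Equiv.Perm Q)) ^ n) a)
          = ((LM b * (LM a * LM b) ^ n : Equiv.Perm Q)) a := rfl
        _ = (((LM a * LM b) ^ (-n) * LM b : Equiv.Perm Q)) a := by rw [pow_conj_b]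
        _ = (((LM a * LM b) ^ (-n) : Equiv.Perm Q)) (LQgrp.mul b a) := rfl
        _ = (((LM a * LM b) ^ (-n) : Equiv.Perm Q))
              ((((LM a * LM b : Equiv.Perm Q)) ^ (-1 : ℤ)) a) := by rw [mul_ba, zpow_neg_one]
        _ = (((LM a * LM b) ^ (-n) * (LM a * LM b) ^ (-1:ℤ) : Equiv.Perm Q)) a := rfl
        _ = (((LM a * LM b : Equiv.Perm Q)) ^ (-n + -1)) a := by rw [← zpow_add]
    rw [e]; exact ⟨-n + -1, Or.inl rfl⟩
  · have e : LQgrp.mul b ((((LM a * LM b : Equiv.Perm Q)) ^ n) b)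
        = (((LM a * LM b : Equiv.Perm Q)) ^ (-n)) b := by
      calc LQgrp.mul b ((((LM a * LM b : Equiv.Perm Q)) ^ n) b)
          = ((LM b * (LM a * LM b) ^ n : Equiv.Perm Q)) b := rfl
        _ = (((LM a * LM b) ^ (-n) * LM b : Equiv.Perm Q)) b := by rw [pow_conj_b]
        _ = (((LM a * LM b) ^ (-n) : Equiv.Perm Q)) (LQgrp.mul b b) := rfl
        _ = (((LM a * LM b) ^ (-n) : Equiv.Perm Q)) b := by rw [Qdl.idem]
    rw [e]; exact ⟨-n, Or.inr rfl⟩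

lemma Tset_mul_closed (a b : Q) {x y : Q} (hx : x ∈ Tset a b) (hy : y ∈ Tset a b) :
    LQgrp.mul x y ∈ Tset a b := by
  obtain ⟨n, rfl | rfl⟩ := hx
  · have e : LQgrp.mul ((((LM a * LM b : Equiv.Perm Q)) ^ n) a) y
        = (((LM a * LM b : Equiv.Perm Q)) ^ n)
            (LQgrp.mul a ((((LM a * LM b : Equiv.Perm Q)) ^ (-n)) y)) := by
      calc LQgrp.mul ((((LM a * LM b : Equiv.Perm Q)) ^ n) a) y
          = (LM ((((LM a * LM b : Equiv.Perm Q)) ^ n) a)) y := rfl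
        _ = (((LM a * LM b) ^ n * LM a * ((LM a * LM b) ^ n)⁻¹ : Equiv.Perm Q)) y := by
            rw [LM_conj_zpow]
        _ = (((LM a * LM b) ^ n * LM a * (LM a * LM b) ^ (-n) : Equiv.Perm Q)) y := by
            rw [zpow_neg]
        _ = _ := rfl
    rw [e]
    exact zpow_mem_Tset a b n (mulA_mem_Tset a b (zpow_mem_Tset a b (-n) hy))
  · have e : LQgrp.mul ((((LM a * LM b : Equiv.Perm Q)) ^ n) b) y
        = (((LM a * LM b : Equiv.Perm Q)) ^ n)
            (LQgrp.mul b ((((LM a * LM b : Equiv.Perm Q)) ^ (-n)) y)) := by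
      calc LQgrp.mul ((((LM a * LM b : Equiv.Perm Q)) ^ n) b) y
          = (LM ((((LM a * LM b : Equiv.Perm Q)) ^ n) b)) y := rfl
        _ = (((LM a * LM b) ^ n * LM b * ((LM a * LM b) ^ n)⁻¹ : Equiv.Perm Q)) y := by
            rw [LM_conj_zpow]
        _ = (((LM a * LM b) ^ n * LM b * (LM a * LM b) ^ (-n) : Equiv.Perm Q)) y := by
            rw [zpow_neg]
        _ = _ := rfl
    rw [e]
    exact zpow_mem_Tset a b n (mulB_mem_Tset a b (zpow_mem_Tset a b (-n) hy))

lemma Tset_isSubalg (a b : Q) : IsSubalg (Tset a b) := by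
  refine ⟨fun x hx y hy => Tset_mul_closed a b hx hy, fun x hx y hy => ?_⟩
  rw [ld_eq_mul]
  exact Tset_mul_closed a b hx hy

lemma mem_Sg_of_mem {X : Set Q} {x : Q} (hx : x ∈ X) : x ∈ Sg X :=
  fun _ hS => hS.2 hx

lemma Sg_isSubalg (X : Set Q) : IsSubalg (Sg X) :=
  ⟨fun x hx y hy S hS => hS.1.1 x (hx S hS) y (hy S hS),
   fun x hx y hy S hS => hS.1.2 x (hx S hS) y (hy S hS)⟩

lemma Sg_subset_Tset (a b : Q) : Sg {a, b} ⊆ Tset a b :=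
  Set.sInter_subset_of_mem
    ⟨Tset_isSubalg a b,
     Set.insert_subset_iff.mpr ⟨a_mem_Tset a b, Set.singleton_subset_iff.mpr (b_mem_Tset a b)⟩⟩

end Stmt16Aux

open Stmt16Aux

/-- for an involutory quandle and `a,b ∈ Q`, the following are
equivalent: `L_a L_b` has finite order; `Sg(a,b)` is finite; `ord_{a,b}` is finite,
i.e. `a^k = b` for some `k > 0`. -/
theorem stmt16 {Q : Type*} [InvQdl Q] (a b : Q) :
    (IsOfFinOrder (LM a * LM b) ↔ (Sg {a, b} : Set Q).Finite) ∧
    ((Sg {a, b} : Set Q).Finite ↔ ∃ k : ℕ, 0 < k ∧ cyc a b k = b) := by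
  have haSg : a ∈ Sg ({a, b} : Set Q) := mem_Sg_of_mem (Set.mem_insert a {b})
  have hbSg : b ∈ Sg ({a, b} : Set Q) :=
    mem_Sg_of_mem (Set.mem_insert_of_mem a rfl)
  -- (i) → (ii)
  have h12 : IsOfFinOrder (LM a * LM b : Equiv.Perm Q) → (Sg {a, b} : Set Q).Finite := by
    intro hford
    have hz : ((Subgroup.zpowers (LM a * LM b : Equiv.Perm Q)) : Set (Equiv.Perm Q)).Finite :=
      hford.finite_zpowers
    refine Set.Finite.subset ((hz.image (fun h => h a)).union (hz.image (fun h => h b))) ?_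
    intro x hx
    obtain ⟨n, rfl | rfl⟩ := Sg_subset_Tset a b hx
    · exact Or.inl ⟨(LM a * LM b) ^ n, Subgroup.mem_zpowers_iff.mpr ⟨n, rfl⟩, rfl⟩
    · exact Or.inr ⟨(LM a * LM b) ^ n, Subgroup.mem_zpowers_iff.mpr ⟨n, rfl⟩, rfl⟩
  -- (ii) → (iii)
  have h23 : (Sg {a, b} : Set Q).Finite → ∃ k : ℕ, 0 < k ∧ cyc a b k = b := by
    intro hfin
    have key : ∀ k : ℕ, (((LM a * LM b : Equiv.Perm Q)) ^ k) b ∈ Sg ({a, b} : Set Q) := by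
      intro k
      induction k with
      | zero => simpa using hbSg
      | succ k ih =>
        have e : (((LM a * LM b : Equiv.Perm Q)) ^ (k + 1)) b
            = LQgrp.mul a (LQgrp.mul b ((((LM a * LM b : Equiv.Perm Q)) ^ k) b)) := by
          rw [pow_succ']; rfl
        rw [e]
        exact (Sg_isSubalg _).1 a haSg _ ((Sg_isSubalg _).1 b hbSg _ ih)
    have hni : ¬ Function.Injective fun k : ℕ => (((LM a * LM b : Equiv.Perm Q)) ^ k) b := by
      intro hinj
      exact (Set.infinite_range_of_injective hinj) (hfin.subset (Set.range_subset_iff.mpr key))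
    rw [Function.not_injective_iff] at hni
    obtain ⟨i, j, hij, hne⟩ := hni
    have hfix : ∃ d : ℕ, 0 < d ∧ (((LM a * LM b : Equiv.Perm Q)) ^ d) b = b := by
      rcases hne.lt_or_gt with hlt | hlt
      · refine ⟨j - i, by omega, ?_⟩
        have e : (((LM a * LM b : Equiv.Perm Q)) ^ i)
            ((((LM a * LM b : Equiv.Perm Q)) ^ (j - i)) b)
            = (((LM a * LM b : Equiv.Perm Q)) ^ i) b := by
          rw [← Equiv.Perm.mul_apply, ← pow_add, show i + (j - i) = j from by omega]
          exact hij.symm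
        exact ((LM a * LM b : Equiv.Perm Q) ^ i).injective e
      · refine ⟨i - j, by omega, ?_⟩
        have e : (((LM a * LM b : Equiv.Perm Q)) ^ j)
            ((((LM a * LM b : Equiv.Perm Q)) ^ (i - j)) b)
            = (((LM a * LM b : Equiv.Perm Q)) ^ j) b := by
          rw [← Equiv.Perm.mul_apply, ← pow_add, show j + (i - j) = i from by omega]
          exact hij
        exact ((LM a * LM b : Equiv.Perm Q) ^ j).injective e
    obtain ⟨d, hd, hfd⟩ := hfix
    refine ⟨2 * d, by omega, ?_⟩
    have h0 : (2 * d) % 2 = 0 := Nat.mul_mod_right 2 d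
    have h1 : 2 * d / 2 = d := Nat.mul_div_cancel_left d (by norm_num)
    simp only [cyc, h0, if_pos, h1]
    exact hfd
  -- (iii) → (i)
  have h31 : (∃ k : ℕ, 0 < k ∧ cyc a b k = b) →
      IsOfFinOrder (LM a * LM b : Equiv.Perm Q) := by
    rintro ⟨k, hk, hcyc⟩
    rw [isOfFinOrder_iff_pow_eq_one]
    rcases Nat.even_or_odd k with he | ho
    · have h0 : k % 2 = 0 := Nat.even_iff.mp he
      have hcyc' : (((LM a * LM b : Equiv.Perm Q)) ^ (k / 2)) b = b := by
        simpa [cyc, h0] using hcyc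
      exact ⟨2 * (k / 2), by omega, ordA a b (k / 2) hcyc'⟩
    · have h0 : k % 2 = 1 := Nat.odd_iff.mp ho
      have hcyc' : (((LM a * LM b : Equiv.Perm Q)) ^ (k / 2)) a = b := by
        simpa [cyc, h0] using hcyc
      exact ⟨2 * (k / 2) + 1, by omega, ordB a b (k / 2) hcyc'⟩
  exact ⟨⟨h12, fun h => h31 (h23 h)⟩, ⟨h23, fun h => h12 (h31 h)⟩⟩
end

section
/- Let Q be an involutory quandle and a,b ∈ Q. The subquandle Sg(a,b) is connected if and only if ord_{a,b} is finite and odd; in that case Sg(a,b) is a finite latin quandle of odd order, isomorphic to Aff(ℤ_{2m+1}, -1) for some m. -/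
open LQgrp

/-!
Put `g = L_a L_b` and extend `a^n` to all `n : ℤ`. Since `L_b g L_b = g⁻¹` and
`L_{h x} = h L_x h⁻¹` for `h ∈ LMlt Q`, one gets `L_{a^n} = g^n L_b` and hence
`a^x * a^y = a^{2x-y}`: `n ↦ a^n` is a homomorphism from `Aff(ℤ, -1)` onto `Sg(a,b)`.
Left translations of `Sg(a,b)` act on indices by `n ↦ 2c - n`, so they preserve the even-indexed
elements; connectedness therefore gives `a = a^{2c}`, and such a coincidence at indices of opposite
parity makes `2c - 1` an odd period of `n ↦ a^n`. Conversely an odd period lets the translations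
`g^k` reach every element. With an odd period, `a^x = a^y` holds exactly when `y - x` lies in the
group of periods `kℤ`, `k` odd, so `Sg(a,b) ≅ Aff(ℤ_k, -1)`, which is latin since `2` is invertible.
-/

open Function

theorem Function.exists_forall_periodic_iff_dvd {α : Type*} (f : ℤ → α) :
    ∃ k : ℕ, ∀ c, Periodic f c ↔ (k : ℤ) ∣ c := by
  let periods : AddSubgroup ℤ :=
    { carrier := {c | Periodic f c}
      add_mem' := Periodic.add_period
      zero_mem' := periodic_with_period_zero f
      neg_mem' := Periodic.neg }
  obtain ⟨d, hd⟩ := Int.subgroup_cyclic periods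
  refine ⟨d.natAbs, fun c => ?_⟩
  rw [Int.natAbs_dvd, ← Int.mem_zmultiples_iff, AddSubgroup.zmultiples_eq_closure, ← hd]
  rfl

theorem ZMod.exists_injective_comp_intCast {α : Type*} {N : ℕ} {e : ℤ → α}
    (he : ∀ x y, e x = e y ↔ (N : ℤ) ∣ y - x) :
    ∃ f : ZMod N → α, Injective f ∧ ∀ n : ℤ, f n = e n := by
  refine ⟨fun z => e (z.cast : ℤ), fun z w h => ?_, fun n => ?_⟩
  · rw [← ZMod.intCast_zmod_cast z, ← ZMod.intCast_zmod_cast w,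
      ZMod.intCast_eq_intCast_iff_dvd_sub, ← he]
    exact h
  · rw [he, ← ZMod.intCast_eq_intCast_iff_dvd_sub, ZMod.intCast_zmod_cast]

theorem bijOn_mul_right_of_zmod {Q : Type*} [LQgrp Q] {N : ℕ} (hN : Odd N) {f : ZMod N → Q}
    (hf : Injective f) (hmul : ∀ x y, f (2 * x - y) = mul (f x) (f y)) {c : Q}
    (hc : c ∈ Set.range f) : Set.BijOn (fun y => mul y c) (Set.range f) (Set.range f) := by
  obtain ⟨z, rfl⟩ := hc
  have : NeZero N := ⟨hN.pos.ne'⟩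
  have h2 : IsUnit (2 : ZMod N) := by
    simpa using (ZMod.isUnit_iff_coprime 2 N).2 (Nat.coprime_two_left.2 hN)
  have hbij : Bijective fun x : ZMod N => 2 * x - z :=
    Finite.injective_iff_bijective.1 fun x y h => h2.mul_left_cancel (sub_left_injective h)
  exact Semiconj.bijOn_range (fun x => hmul x z) hbij hf

section Quandle

variable {Q : Type*} [Qdl Q]

theorem LM_mul (c x : Q) : LM (mul c x) = LM c * LM x * (LM c)⁻¹ := by
  rw [eq_mul_inv_iff_mul_eq]
  ext y
  exact (Qdl.ldist c x y).symm

theorem LM_apply_eq_conj_of_mem_LMlt {h : Equiv.Perm Q} (hh : h ∈ LMlt Q) (x : Q) :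
    LM (h x) = h * LM x * h⁻¹ := by
  induction hh using Subgroup.closure_induction generalizing x with
  | mem _ hc => obtain ⟨c, rfl⟩ := hc; exact LM_mul c x
  | one => simp
  | mul h₁ h₂ _ _ ih₁ ih₂ => rw [Equiv.Perm.mul_apply, ih₁, ih₂]; group
  | inv h _ ih =>
    have := ih (h⁻¹ x)
    rw [← Equiv.Perm.mul_apply, mul_inv_cancel, Equiv.Perm.one_apply] at this
    rw [this]; group

end Quandle

section Involutory

variable {Q : Type*} [InvQdl Q]

theorem ld_eq_mul (x y : Q) : ld x y = mul x y := by
  conv_lhs => rw [← InvQdl.invol x y, ld_mul]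

theorem LM_mul_self (c : Q) : LM c * LM c = 1 :=
  Equiv.ext fun x => InvQdl.invol c x

theorem LM_inv (c : Q) : (LM c)⁻¹ = LM c :=
  inv_eq_of_mul_eq_one_right (LM_mul_self c)

variable (a b : Q)

theorem LM_mul_zpow (n : ℤ) : LM b * (LM a * LM b) ^ n = (LM a * LM b) ^ (-n) * LM b := by
  have h : LM b * (LM a * LM b) * (LM b)⁻¹ = (LM a * LM b)⁻¹ := by
    simp only [mul_inv_rev, LM_inv, mul_assoc, LM_mul_self, mul_one]
  rw [zpow_neg, ← inv_zpow, ← h, conj_zpow, LM_inv, mul_assoc, LM_mul_self, mul_one]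

/-- The paper's `a^n`, for all `n : ℤ`. -/
def cycInt (n : ℤ) : Q :=
  if n % 2 = 0 then ((LM a * LM b) ^ (n / 2)) b else ((LM a * LM b) ^ (n / 2)) a

theorem cycInt_natCast (k : ℕ) : cycInt a b k = cyc a b k := by
  rw [cycInt, cyc, show (k : ℤ) / 2 = (k / 2 : ℕ) by omega, zpow_natCast]
  simp only [show (k : ℤ) % 2 = 0 ↔ k % 2 = 0 by omega]

theorem cycInt_zero : cycInt a b 0 = b := by simp [cycInt]

theorem cycInt_one : cycInt a b 1 = a := by simp [cycInt]

theorem zpow_apply_cycInt (k n : ℤ) :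
    ((LM a * LM b) ^ k) (cycInt a b n) = cycInt a b (n + 2 * k) := by
  simp only [cycInt, Int.add_mul_emod_self_left, Int.add_mul_ediv_left _ _ two_ne_zero]
  split_ifs <;> rw [← Equiv.Perm.mul_apply, ← zpow_add, add_comm]

theorem cycInt_eq_zpow_apply (n : ℤ) :
    cycInt a b n = ((LM a * LM b) ^ (n / 2)) (cycInt a b (n % 2)) := by
  rw [zpow_apply_cycInt, Int.emod_add_mul_ediv]

theorem LM_cycInt (n : ℤ) : LM (cycInt a b n) = (LM a * LM b) ^ n * LM b := by
  have hmem : (LM a * LM b) ^ (n / 2) ∈ LMlt Q :=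
    zpow_mem (mul_mem (Subgroup.subset_closure (Set.mem_range_self a))
      (Subgroup.subset_closure (Set.mem_range_self b))) _
  have hbase : LM (cycInt a b (n % 2)) = (LM a * LM b) ^ (n % 2) * LM b := by
    rcases Int.emod_two_eq_zero_or_one n with h | h <;> rw [h]
    · simp [cycInt_zero]
    · simp [cycInt_one, mul_assoc, LM_mul_self]
  rw [cycInt_eq_zpow_apply, LM_apply_eq_conj_of_mem_LMlt hmem, hbase, ← zpow_neg, mul_assoc,
    mul_assoc, LM_mul_zpow, neg_neg, ← mul_assoc, ← mul_assoc, ← zpow_add, ← zpow_add]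
  congr 3
  omega

theorem LM_apply_cycInt (n : ℤ) : LM b (cycInt a b n) = cycInt a b (-n) := by
  have hbase : LM b (cycInt a b (n % 2)) = cycInt a b (-(n % 2)) := by
    rcases Int.emod_two_eq_zero_or_one n with h | h <;> rw [h]
    · simp [cycInt_zero, LM, Qdl.idem]
    · have : cycInt a b (-1) = ((LM a * LM b) ^ (-1 : ℤ)) (cycInt a b 1) := by
        rw [zpow_apply_cycInt]; norm_num
      rw [this, cycInt_one, zpow_neg_one, mul_inv_rev, LM_inv, LM_inv, Equiv.Perm.mul_apply]
      exact congrArg (LM b) (Qdl.idem a).symm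
  rw [cycInt_eq_zpow_apply, ← Equiv.Perm.mul_apply, LM_mul_zpow, Equiv.Perm.mul_apply, hbase,
    zpow_apply_cycInt]
  congr 1; omega

theorem mul_cycInt (x y : ℤ) : mul (cycInt a b x) (cycInt a b y) = cycInt a b (2 * x - y) := by
  show LM (cycInt a b x) (cycInt a b y) = _
  rw [LM_cycInt, Equiv.Perm.mul_apply, LM_apply_cycInt, zpow_apply_cycInt]
  congr 1; ring

theorem range_cycInt_subset {S : Set Q} (hS : IsSubalg S) (ha : a ∈ S) (hb : b ∈ S) :
    Set.range (cycInt a b) ⊆ S := by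
  have key : ∀ n, cycInt a b n ∈ S ∧ cycInt a b (n + 1) ∈ S := by
    intro n
    induction n using Int.induction_on with
    | zero => exact ⟨by rwa [cycInt_zero], by rwa [zero_add, cycInt_one]⟩
    | succ n ih =>
      refine ⟨ih.2, ?_⟩
      rw [show (n : ℤ) + 1 + 1 = 2 * (n + 1) - n by ring, ← mul_cycInt]
      exact hS.1 _ ih.2 _ ih.1
    | pred n ih =>
      refine ⟨?_, by simpa using ih.1⟩
      rw [show -(n : ℤ) - 1 = 2 * -n - (-n + 1) by ring, ← mul_cycInt]
      exact hS.1 _ ih.1 _ ih.2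
  rintro _ ⟨n, rfl⟩
  exact (key n).1

theorem isSubalg_range_cycInt : IsSubalg (Set.range (cycInt a b)) := by
  have h : ∀ x y, mul (cycInt a b x) (cycInt a b y) ∈ Set.range (cycInt a b) :=
    fun x y => ⟨2 * x - y, (mul_cycInt a b x y).symm⟩
  constructor <;> rintro _ ⟨x, rfl⟩ _ ⟨y, rfl⟩
  · exact h x y
  · rw [ld_eq_mul]; exact h x y

theorem Sg_pair_eq_range_cycInt : Sg {a, b} = Set.range (cycInt a b) := by
  have hab : {a, b} ⊆ Set.range (cycInt a b) :=
    Set.insert_subset ⟨1, cycInt_one a b⟩ (Set.singleton_subset_iff.2 ⟨0, cycInt_zero a b⟩)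
  exact subset_antisymm (Set.sInter_subset_of_mem ⟨isSubalg_range_cycInt a b, hab⟩)
    (Set.subset_sInter fun S hS => range_cycInt_subset a b hS.1 (hS.2 (by simp)) (hS.2 (by simp)))

variable {a b}

theorem cycInt_two_mul_sub_eq {x y : ℤ} (h : cycInt a b x = cycInt a b y) (z : ℤ) :
    cycInt a b (2 * z - x) = cycInt a b (2 * z - y) := by
  rw [← mul_cycInt, h, mul_cycInt]

theorem cycInt_add_two_mul_eq {x y : ℤ} (h : cycInt a b x = cycInt a b y) (k : ℤ) :
    cycInt a b (x + 2 * k) = cycInt a b (y + 2 * k) := by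
  rw [← zpow_apply_cycInt, h, zpow_apply_cycInt]

theorem periodic_cycInt_of_eq {x y : ℤ} (h : cycInt a b x = cycInt a b y) (hodd : Odd (y - x)) :
    Periodic (cycInt a b) (y - x) := by
  -- every `w` is `x + 2k` or `2z - y`, and `n ↦ n + 2k`, `n ↦ 2z - n` preserve `a^x = a^y`
  intro w
  obtain ⟨m, hm⟩ := hodd
  rcases Int.even_or_odd (w - x) with ⟨k, hk⟩ | ⟨k, hk⟩
  · rw [show w = x + 2 * k by omega, show x + 2 * k + (y - x) = y + 2 * k by ring,
      cycInt_add_two_mul_eq h]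
  · rw [show w = 2 * (x + k + m + 1) - y by omega,
      show 2 * (x + k + m + 1) - y + (y - x) = 2 * (x + k + m + 1) - x by ring,
      cycInt_two_mul_sub_eq h]

theorem connectedSet_Sg_pair_of_periodic {t : ℤ} (hodd : Odd t) (ht : Periodic (cycInt a b) t) :
    ConnectedSet (Sg {a, b}) := by
  rw [Sg_pair_eq_range_cycInt]
  rintro _ ⟨n, rfl⟩ _ ⟨m, rfl⟩
  have hg : LM a * LM b ∈ Subgroup.closure (LM '' Set.range (cycInt a b)) :=
    mul_mem (Subgroup.subset_closure ⟨a, ⟨1, cycInt_one a b⟩, rfl⟩)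
      (Subgroup.subset_closure ⟨b, ⟨0, cycInt_zero a b⟩, rfl⟩)
  obtain ⟨k, hk⟩ : ∃ k, cycInt a b (n + 2 * k) = cycInt a b m := by
    rcases Int.even_or_odd (m - n) with ⟨k, hk⟩ | ⟨k, hk⟩
    · exact ⟨k, by congr 1; omega⟩
    · obtain ⟨j, hj⟩ := hodd
      exact ⟨k + j + 1, by rw [← ht m]; congr 1; omega⟩
  exact ⟨_, zpow_mem hg k, by rw [zpow_apply_cycInt, hk]⟩

open Pointwise in
theorem exists_odd_periodic_of_connectedSet (h : ConnectedSet (Sg {a, b})) :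
    ∃ t, Odd t ∧ Periodic (cycInt a b) t := by
  rw [Sg_pair_eq_range_cycInt] at h
  set E := Set.range fun c : ℤ => cycInt a b (2 * c)
  have hstab : Subgroup.closure (LM '' Set.range (cycInt a b)) ≤
      MulAction.stabilizer (Equiv.Perm Q) E := by
    rw [Subgroup.closure_le]
    rintro _ ⟨_, ⟨n, rfl⟩, rfl⟩
    have hcomm : (fun x => LM (cycInt a b n) • x) ∘ (fun c : ℤ => cycInt a b (2 * c)) =
        (fun c => cycInt a b (2 * c)) ∘ (Equiv.subLeft n) := by
      funext c
      simp only [comp_apply, Equiv.Perm.smul_def, Equiv.subLeft_apply, mul_sub]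
      exact mul_cycInt a b n (2 * c)
    rw [SetLike.mem_coe, MulAction.mem_stabilizer_iff, ← Set.image_smul, ← Set.range_comp, hcomm,
      (Equiv.subLeft n).surjective.range_comp]
  obtain ⟨g, hg, hgb⟩ := h b ⟨0, cycInt_zero a b⟩ a ⟨1, cycInt_one a b⟩
  obtain ⟨c, hc⟩ : a ∈ E := by
    rw [← MulAction.mem_stabilizer_iff.1 (hstab hg), ← hgb]
    exact Set.smul_mem_smul_set ⟨0, by simp [cycInt_zero]⟩
  have hodd : Odd (2 * c - 1) := ⟨c - 1, by ring⟩
  exact ⟨2 * c - 1, hodd, periodic_cycInt_of_eq ((cycInt_one a b).trans hc.symm) hodd⟩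

theorem cycInt_eq_iff_dvd {k : ℕ} (hk : ∀ c, Periodic (cycInt a b) c ↔ (k : ℤ) ∣ c)
    (hodd : Odd k) (x y : ℤ) : cycInt a b x = cycInt a b y ↔ (k : ℤ) ∣ y - x := by
  refine ⟨fun h => ?_, fun h => by simpa using ((hk _).2 h x).symm⟩
  rcases Int.even_or_odd (y - x) with heven | hyx
  · have hk' : Odd (y + k - x) := by
      rw [add_sub_right_comm]; exact heven.add_odd (Int.odd_coe_nat k |>.2 hodd)
    have := (hk _).1 (periodic_cycInt_of_eq (h.trans ((hk k).2 dvd_rfl y).symm) hk')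
    simpa [add_sub_right_comm] using this
  · exact (hk _).1 (periodic_cycInt_of_eq h hyx)

theorem exists_odd_cycInt_eq_iff_dvd {t : ℤ} (hodd : Odd t) (ht : Periodic (cycInt a b) t) :
    ∃ k : ℕ, Odd k ∧ ∀ x y, cycInt a b x = cycInt a b y ↔ (k : ℤ) ∣ y - x := by
  obtain ⟨k, hk⟩ := exists_forall_periodic_iff_dvd (cycInt a b)
  have hkodd : Odd k := hodd.natAbs.of_dvd_nat (Int.natCast_dvd.1 ((hk t).1 ht))
  exact ⟨k, hkodd, cycInt_eq_iff_dvd hk hkodd⟩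

theorem exists_zmod_affine_Sg_pair {N : ℕ}
    (he : ∀ x y, cycInt a b x = cycInt a b y ↔ (N : ℤ) ∣ y - x) :
    ∃ f : ZMod N → Q, Injective f ∧ Set.range f = Sg {a, b} ∧
      ∀ x y, f (2 * x - y) = mul (f x) (f y) := by
  obtain ⟨f, hf, hfe⟩ := ZMod.exists_injective_comp_intCast he
  refine ⟨f, hf, ?_, fun x y => ?_⟩
  · rw [Sg_pair_eq_range_cycInt, ← ZMod.intCast_surjective.range_comp]
    exact congrArg Set.range (funext hfe)
  · obtain ⟨x, rfl⟩ := ZMod.intCast_surjective x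
    obtain ⟨y, rfl⟩ := ZMod.intCast_surjective y
    rw [show 2 * (x : ZMod N) - y = ((2 * x - y : ℤ) : ZMod N) by push_cast; ring, hfe, hfe, hfe,
      mul_cycInt]

end Involutory

/-- `Sg(a,b)` is connected iff `ord_{a,b}` is finite and odd; in
that case `Sg(a,b)` is a finite latin quandle of odd order, isomorphic to
`Aff(ℤ_{2m+1}, -1)` for some `m`. -/
theorem stmt17 {Q : Type*} [InvQdl Q] (a b : Q) :
    (ConnectedSet (Sg {a, b}) ↔
      ∃ k : ℕ, 0 < k ∧ Odd k ∧ cyc a b k = b ∧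
        ∀ j : ℕ, 0 < j → cyc a b j = b → k ≤ j) ∧
    (ConnectedSet (Sg {a, b}) →
      (Sg {a, b} : Set Q).Finite ∧
      (∀ c ∈ Sg {a, b}, Set.BijOn (fun y => mul y c) (Sg {a, b}) (Sg {a, b})) ∧
      ∃ m : ℕ, Nat.card ↥(Sg {a, b} : Set Q) = 2 * m + 1 ∧
        ∃ e : ZMod (2 * m + 1) → Q, Function.Injective e ∧
          Set.range e = (Sg {a, b} : Set Q) ∧
          ∀ x y : ZMod (2 * m + 1), e (2 * x - y) = mul (e x) (e y)) := by
  have hcyc_iff : ∀ {k : ℕ}, (∀ x y, cycInt a b x = cycInt a b y ↔ (k : ℤ) ∣ y - x) →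
      ∀ j : ℕ, cyc a b j = b ↔ k ∣ j := fun he j => by
    have := he 0 j
    rwa [cycInt_zero, cycInt_natCast, sub_zero, Int.natCast_dvd_natCast, eq_comm] at this
  refine ⟨⟨fun hconn => ?_, fun ⟨k, _, hk, hkb, _⟩ => ?_⟩, fun hconn => ?_⟩
  · obtain ⟨t, ht, htper⟩ := exists_odd_periodic_of_connectedSet hconn
    obtain ⟨k, hk, he⟩ := exists_odd_cycInt_eq_iff_dvd ht htper
    exact ⟨k, hk.pos, hk, (hcyc_iff he k).2 dvd_rfl,
      fun j hj hjb => Nat.le_of_dvd hj ((hcyc_iff he j).1 hjb)⟩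
  · have hk0 : cycInt a b 0 = cycInt a b k := by rw [cycInt_natCast, hkb, cycInt_zero]
    have hodd : Odd ((k : ℤ) - 0) := by simpa using hk
    exact connectedSet_Sg_pair_of_periodic hodd (periodic_cycInt_of_eq hk0 hodd)
  · obtain ⟨t, ht, htper⟩ := exists_odd_periodic_of_connectedSet hconn
    obtain ⟨_, ⟨m, rfl⟩, he⟩ := exists_odd_cycInt_eq_iff_dvd ht htper
    obtain ⟨f, hf, hrange, hmul⟩ := exists_zmod_affine_Sg_pair he
    rw [← hrange]
    exact ⟨Set.finite_range f, fun c hc => bijOn_mul_right_of_zmod ⟨m, rfl⟩ hf hmul hc, m,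
      by rw [Nat.card_range_of_injective hf, Nat.card_zmod], f, hf, rfl, hmul⟩
end

section
/- For an involutory quandle Q the following are equivalent: (i) Q is superconnected; (ii) Q is latin and L_a L_b has finite order for all a,b ∈ Q; (iii) ord_{a,b} = |L_a L_b| is finite and odd for all a,b ∈ Q. -/
open LQgrp

/-! ### Auxiliary group-theoretic lemmas -/

section Grp

variable {G : Type*} [Group G] {s r t : G}

private lemma inv_self (hs : s * s = 1) : s⁻¹ = s := inv_eq_of_mul_eq_one_right hs

private lemma sts' (hs : s * s = 1) (hr : r * r = 1) : s * (s * r) * s = (s * r)⁻¹ := by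
  rw [mul_inv_rev, inv_self hs, inv_self hr, ← mul_assoc, hs, one_mul]

private lemma rtr' (hs : s * s = 1) (hr : r * r = 1) : r * (s * r) * r = (s * r)⁻¹ := by
  rw [mul_inv_rev, inv_self hs, inv_self hr, mul_assoc, mul_assoc, hr, mul_one]

private lemma conj_zpow_inv (hs : s * s = 1) (h : s * t * s = t⁻¹) (m : ℤ) :
    s * t ^ m * s = t ^ (-m) := by
  calc s * t ^ m * s = s * t ^ m * s⁻¹ := by rw [inv_self hs]
    _ = (s * t * s⁻¹) ^ m := conj_zpow.symm
    _ = (t⁻¹) ^ m := by rw [inv_self hs, h]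
    _ = t ^ (-m) := by rw [zpow_neg, inv_zpow]

private lemma conj_pow_inv (hs : s * s = 1) (h : s * t * s = t⁻¹) (k : ℕ) :
    s * t ^ k * s = (t ^ k)⁻¹ := by
  calc s * t ^ k * s = s * t ^ k * s⁻¹ := by rw [inv_self hs]
    _ = (s * t * s⁻¹) ^ k := conj_pow.symm
    _ = (t⁻¹) ^ k := by rw [inv_self hs, h]
    _ = (t ^ k)⁻¹ := by rw [inv_pow]

private lemma swap_pow_inv (hs : s * s = 1) (h : s * t * s = t⁻¹) (k : ℕ) :
    s * (t ^ k)⁻¹ = t ^ k * s := by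
  have h2 := conj_pow_inv hs h k
  calc s * (t ^ k)⁻¹ = s * (s * t ^ k * s) := by rw [← h2]
    _ = t ^ k * s := by rw [← mul_assoc, ← mul_assoc, hs, one_mul]

private lemma key_conj_pow (hs : s * s = 1) (hr : r * r = 1) (k : ℕ) :
    (s * r) ^ k * s * ((s * r) ^ k)⁻¹ = (s * r) ^ (2 * k) * s := by
  rw [mul_assoc, swap_pow_inv hs (sts' hs hr) k, ← mul_assoc, ← pow_add, two_mul]

private lemma key_conj_pow_r (hs : s * s = 1) (hr : r * r = 1) (k : ℕ) :
    (s * r) ^ k * r * ((s * r) ^ k)⁻¹ = (s * r) ^ (2 * k) * r := by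
  rw [mul_assoc, swap_pow_inv hr (rtr' hs hr) k, ← mul_assoc, ← pow_add, two_mul]

private lemma grp_key (hs : s * s = 1) (hr : r * r = 1) (m : ℤ)
    (h : r = (s * r) ^ m * s * ((s * r) ^ m)⁻¹) : (s * r) ^ (2 * m + 1) = 1 := by
  have hsts : s * (s * r) * s = (s * r)⁻¹ := sts' hs hr
  have hconj := conj_zpow_inv hs hsts m
  have hkey : s * r = (s * r) ^ (-m) * (s * r) ^ (-m) := by
    conv_lhs => rw [h]
    rw [← mul_assoc, ← mul_assoc, hconj, ← zpow_neg]
  have h0 : 2 * m + 1 = (2 * m) + 1 := rfl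
  calc (s * r) ^ (2 * m + 1) = (s * r) ^ (2 * m) * (s * r) := by rw [zpow_add, zpow_one]
    _ = (s * r) ^ (2 * m) * ((s * r) ^ (-m) * (s * r) ^ (-m)) := by rw [← hkey]
    _ = (s * r) ^ (2 * m + (-m + -m)) := by rw [← zpow_add, ← zpow_add]
    _ = 1 := by rw [show 2 * m + (-m + -m) = 0 by ring, zpow_zero]

private lemma grp_key2 (hs : s * s = 1) (hr : r * r = 1) (k : ℤ)
    (h : r = (s * r) ^ k * r * ((s * r) ^ k)⁻¹) : (s * r) ^ (2 * k) = 1 := by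
  have hrtr : r * (s * r) * r = (s * r)⁻¹ := rtr' hs hr
  have hcomm : r * (s * r) ^ k = (s * r) ^ k * r := by
    have h2 : r * (s * r) ^ k = (s * r) ^ k * r * ((s * r) ^ k)⁻¹ * (s * r) ^ k := by
      rw [← h]
    rw [h2, inv_mul_cancel_right]
  have hneg : (s * r) ^ (-k) = (s * r) ^ k := by
    calc (s * r) ^ (-k) = r * (s * r) ^ k * r := (conj_zpow_inv hr hrtr k).symm
      _ = (s * r) ^ k * r * r := by rw [hcomm]
      _ = (s * r) ^ k := by rw [mul_assoc, hr, mul_one]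
  calc (s * r) ^ (2 * k) = (s * r) ^ k * (s * r) ^ k := by rw [two_mul, zpow_add]
    _ = (s * r) ^ k * (s * r) ^ (-k) := by rw [hneg]
    _ = 1 := by rw [← zpow_add, show k + -k = 0 by ring, zpow_zero]

end Grp

/-! ### Quandle lemmas -/

namespace Stmt18Aux

variable {Q : Type*} [InvQdl Q]

lemma LM_mul_self (a : Q) : LM a * LM a = 1 := by
  ext z
  rw [Equiv.Perm.mul_apply, Equiv.Perm.one_apply]
  exact InvQdl.invol a z

lemma LM_inv (a : Q) : (LM a)⁻¹ = LM a := inv_eq_of_mul_eq_one_right (LM_mul_self a)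

lemma LM_app (a z : Q) : LM a z = LQgrp.mul a z := rfl

lemma LM_self (a : Q) : LM a a = a := Qdl.idem a

lemma ld_eq_mul (x y : Q) : LQgrp.ld x y = LQgrp.mul x y := by
  apply (LM x).injective
  show LQgrp.mul x (LQgrp.ld x y) = LQgrp.mul x (LQgrp.mul x y)
  rw [LQgrp.mul_ld, InvQdl.invol]

lemma conj_LM (c d : Q) : LM (LQgrp.mul c d) = LM c * LM d * (LM c)⁻¹ := by
  rw [eq_mul_inv_iff_mul_eq]
  ext z
  rw [Equiv.Perm.mul_apply, Equiv.Perm.mul_apply]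
  exact (Qdl.ldist c d z).symm

lemma conj_closure {g : Equiv.Perm Q}
    (hg : g ∈ Subgroup.closure (Set.range (LM : Q → Equiv.Perm Q))) :
    ∀ z : Q, LM (g z) = g * LM z * g⁻¹ := by
  induction hg using Subgroup.closure_induction with
  | mem x hx =>
    obtain ⟨c, rfl⟩ := hx
    intro z
    exact conj_LM c z
  | one => intro z; simp
  | mul x y hx hy ihx ihy =>
    intro z
    have hxy : (x * y) z = x (y z) := rfl
    rw [hxy, ihx, ihy]
    group
  | inv x hx ih =>
    intro z
    have h := ih (x⁻¹ z)
    have hxx : x (x⁻¹ z) = z := by simp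
    rw [hxx] at h
    rw [h]
    group

lemma t_mem (a b : Q) :
    LM a * LM b ∈ Subgroup.closure (Set.range (LM : Q → Equiv.Perm Q)) :=
  mul_mem (Subgroup.subset_closure ⟨a, rfl⟩) (Subgroup.subset_closure ⟨b, rfl⟩)

/-- the `clause` in statement (iii). -/
@[reducible] def clause (a b : Q) : Prop :=
  IsOfFinOrder (LM a * LM b) ∧ Odd (orderOf (LM a * LM b)) ∧
    cyc a b (orderOf (LM a * LM b)) = b ∧
    ∀ j : ℕ, 0 < j → cyc a b j = b → orderOf (LM a * LM b) ≤ j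

lemma cyc_odd (a b : Q) {j : ℕ} (hj : j % 2 = 1) :
    cyc a b j = ((LM a * LM b) ^ (j / 2)) a := by
  unfold cyc
  rw [if_neg (by omega)]

lemma cyc_even (a b : Q) {j : ℕ} (hj : j % 2 = 0) :
    cyc a b j = ((LM a * LM b) ^ (j / 2)) b := by
  unfold cyc
  rw [if_pos hj]

lemma dvd_of_odd_hit {a b : Q} (m : ℤ) (hm : ((LM a * LM b) ^ m) a = b) :
    (orderOf (LM a * LM b) : ℤ) ∣ 2 * m + 1 := by
  have hconjLb : LM b = (LM a * LM b) ^ m * LM a * ((LM a * LM b) ^ m)⁻¹ := by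
    have hcc := conj_closure (zpow_mem (t_mem a b) m) a
    rw [hm] at hcc
    exact hcc
  exact orderOf_dvd_iff_zpow_eq_one.mpr (grp_key (LM_mul_self a) (LM_mul_self b) m hconjLb)

lemma dvd_of_even_fix {a b : Q} (k : ℤ) (hk : ((LM a * LM b) ^ k) b = b) :
    (orderOf (LM a * LM b) : ℤ) ∣ 2 * k := by
  have hconj : LM b = (LM a * LM b) ^ k * LM b * ((LM a * LM b) ^ k)⁻¹ := by
    have hcc := conj_closure (zpow_mem (t_mem a b) k) b
    rw [hk] at hcc
    exact hcc
  exact orderOf_dvd_iff_zpow_eq_one.mpr (grp_key2 (LM_mul_self a) (LM_mul_self b) k hconj)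

lemma mul_tpow_a (a b : Q) (k : ℕ) :
    LQgrp.mul (((LM a * LM b) ^ k) a) a = ((LM a * LM b) ^ (2 * k)) a := by
  have hc := conj_closure (pow_mem (t_mem a b) k) a
  have hG := key_conj_pow (LM_mul_self a) (LM_mul_self b) k
  calc LQgrp.mul (((LM a * LM b) ^ k) a) a
      = LM (((LM a * LM b) ^ k) a) a := rfl
    _ = ((LM a * LM b) ^ k * LM a * ((LM a * LM b) ^ k)⁻¹) a := by rw [hc]
    _ = ((LM a * LM b) ^ (2 * k) * LM a) a := by rw [hG]
    _ = ((LM a * LM b) ^ (2 * k)) (LM a a) := rfl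
    _ = ((LM a * LM b) ^ (2 * k)) a := by rw [LM_self]

lemma mul_tpow_b (a b : Q) (k : ℕ) :
    LQgrp.mul (((LM a * LM b) ^ k) b) a = ((LM a * LM b) ^ (2 * k)) (LM b a) := by
  have hc := conj_closure (pow_mem (t_mem a b) k) b
  have hG := key_conj_pow_r (LM_mul_self a) (LM_mul_self b) k
  calc LQgrp.mul (((LM a * LM b) ^ k) b) a
      = LM (((LM a * LM b) ^ k) b) a := rfl
    _ = ((LM a * LM b) ^ k * LM b * ((LM a * LM b) ^ k)⁻¹) a := by rw [hc]
    _ = ((LM a * LM b) ^ (2 * k) * LM b) a := by rw [hG]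
    _ = ((LM a * LM b) ^ (2 * k)) (LM b a) := rfl

/-! ### (∃ m, t^m a = b) implies the clause -/

lemma clause_of_exists {a b : Q} (hex : ∃ m : ℤ, ((LM a * LM b) ^ m) a = b) :
    clause a b := by
  obtain ⟨m, hm⟩ := hex
  have hdvd := dvd_of_odd_hit m hm
  have hn0 : orderOf (LM a * LM b) ≠ 0 := by
    intro h0
    rw [h0] at hdvd
    simp only [Nat.cast_zero, zero_dvd_iff] at hdvd
    omega
  have hfin : IsOfFinOrder (LM a * LM b) := by
    by_contra hcon
    exact hn0 (orderOf_eq_zero_iff.mpr hcon)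
  have h2 : ¬ ((2 : ℤ) ∣ 2 * m + 1) := by omega
  have hodd : Odd (orderOf (LM a * LM b)) := by
    rcases Nat.even_or_odd (orderOf (LM a * LM b)) with he | ho
    · exact absurd (dvd_trans (by exact_mod_cast he.two_dvd) hdvd) h2
    · exact ho
  have hodd' := hodd
  obtain ⟨c, hc⟩ := hodd'
  have hcop : IsCoprime ((orderOf (LM a * LM b) : ℤ)) 2 := by
    rw [Int.isCoprime_iff_gcd_eq_one]
    have : Int.gcd (orderOf (LM a * LM b) : ℤ) 2 = Nat.gcd (orderOf (LM a * LM b)) 2 := rfl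
    rw [this]
    exact Nat.coprime_two_right.mpr hodd
  have hdvd2 : (orderOf (LM a * LM b) : ℤ) ∣ (m - c) := by
    have h1 : (orderOf (LM a * LM b) : ℤ) ∣ 2 * (m - c) := by
      have he : 2 * (m - (c : ℤ)) = (2 * m + 1) - (orderOf (LM a * LM b) : ℤ) := by
        rw [hc]
        push_cast
        ring
      rw [he]
      exact dvd_sub hdvd dvd_rfl
    exact hcop.dvd_of_dvd_mul_left h1
  have hcyc : cyc a b (orderOf (LM a * LM b)) = b := by
    rw [cyc_odd a b (by omega : orderOf (LM a * LM b) % 2 = 1),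
      (by omega : orderOf (LM a * LM b) / 2 = c)]
    have hz : (LM a * LM b) ^ (c : ℤ) = (LM a * LM b) ^ m := by
      have h1 : (LM a * LM b) ^ (m - c) = 1 := orderOf_dvd_iff_zpow_eq_one.mp hdvd2
      calc (LM a * LM b) ^ (c : ℤ)
          = (LM a * LM b) ^ (c : ℤ) * (LM a * LM b) ^ (m - c) := by rw [h1, mul_one]
        _ = (LM a * LM b) ^ m := by rw [← zpow_add]; congr 1; ring
    have : ((LM a * LM b) ^ (c : ℤ)) a = b := by rw [hz]; exact hm
    rw [← zpow_natCast]
    exact this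
  refine ⟨hfin, hodd, hcyc, ?_⟩
  intro j hj hcj
  rcases Nat.even_or_odd j with hje | hjo
  · obtain ⟨d, hd⟩ := hje
    rw [cyc_even a b (by omega : j % 2 = 0), (by omega : j / 2 = d)] at hcj
    have hz : ((LM a * LM b) ^ (d : ℤ)) b = b := by rw [zpow_natCast]; exact hcj
    have hdd := dvd_of_even_fix (d : ℤ) hz
    have hnat : orderOf (LM a * LM b) ∣ j := by
      have : ((orderOf (LM a * LM b)) : ℤ) ∣ (j : ℤ) := by
        rw [show ((j : ℤ)) = 2 * (d : ℤ) by omega]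
        exact hdd
      exact_mod_cast this
    exact Nat.le_of_dvd hj hnat
  · obtain ⟨d, hd⟩ := hjo
    rw [cyc_odd a b (by omega : j % 2 = 1), (by omega : j / 2 = d)] at hcj
    have hz : ((LM a * LM b) ^ (d : ℤ)) a = b := by rw [zpow_natCast]; exact hcj
    have hdd := dvd_of_odd_hit (d : ℤ) hz
    have hnat : orderOf (LM a * LM b) ∣ j := by
      have : ((orderOf (LM a * LM b)) : ℤ) ∣ (j : ℤ) := by
        rw [show ((j : ℤ)) = 2 * (d : ℤ) + 1 by omega]
        exact hdd
      exact_mod_cast this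
    exact Nat.le_of_dvd hj hnat

/-! ### Superconnected implies existence -/

lemma isSubalg_Sg (X : Set Q) : IsSubalg (Sg X) := by
  constructor
  · intro a ha b hb
    intro S hS
    exact hS.1.1 a (ha S hS) b (hb S hS)
  · intro a ha b hb
    intro S hS
    exact hS.1.2 a (ha S hS) b (hb S hS)

lemma subset_Sg (X : Set Q) : X ⊆ Sg X := fun x hx S hS => hS.2 hx

lemma LM_mem_of_mem_Sg {a b c : Q} (hc : c ∈ Sg {a, b}) :
    LM c ∈ Subgroup.closure ({LM a, LM b} : Set (Equiv.Perm Q)) := by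
  have hT : ({c : Q | LM c ∈ Subgroup.closure ({LM a, LM b} : Set (Equiv.Perm Q))})
      ∈ {S : Set Q | IsSubalg S ∧ ({a, b} : Set Q) ⊆ S} := by
    refine ⟨⟨?_, ?_⟩, ?_⟩
    · intro x hx y hy
      show LM (LQgrp.mul x y) ∈ Subgroup.closure ({LM a, LM b} : Set (Equiv.Perm Q))
      rw [conj_LM]
      exact mul_mem (mul_mem hx hy) (inv_mem hx)
    · intro x hx y hy
      show LM (LQgrp.ld x y) ∈ Subgroup.closure ({LM a, LM b} : Set (Equiv.Perm Q))
      rw [ld_eq_mul, conj_LM]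
      exact mul_mem (mul_mem hx hy) (inv_mem hx)
    · intro x hx
      simp only [Set.mem_insert_iff, Set.mem_singleton_iff] at hx
      rcases hx with rfl | rfl
      · exact Subgroup.subset_closure (by simp)
      · exact Subgroup.subset_closure (by simp)
  exact (Set.sInter_subset_of_mem hT) hc

lemma s_mul_zpow (a b : Q) (k : ℤ) :
    LM a * (LM a * LM b) ^ k = (LM a * LM b) ^ (-k) * LM a := by
  have h := conj_zpow_inv (LM_mul_self a) (sts' (LM_mul_self a) (LM_mul_self b)) k
  calc LM a * (LM a * LM b) ^ k
      = (LM a * (LM a * LM b) ^ k * LM a) * LM a := by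
        rw [mul_assoc, LM_mul_self, mul_one]
    _ = (LM a * LM b) ^ (-k) * LM a := by rw [h]

lemma dihedral_form {a b : Q} {h : Equiv.Perm Q}
    (hh : h ∈ Subgroup.closure ({LM a, LM b} : Set (Equiv.Perm Q))) :
    ∃ m : ℤ, h = (LM a * LM b) ^ m ∨ h = (LM a * LM b) ^ m * LM a := by
  induction hh using Subgroup.closure_induction with
  | mem x hx =>
    simp only [Set.mem_insert_iff, Set.mem_singleton_iff] at hx
    rcases hx with rfl | rfl
    · exact ⟨0, Or.inr (by rw [zpow_zero, one_mul])⟩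
    · refine ⟨-1, Or.inr ?_⟩
      rw [zpow_neg_one, mul_inv_rev, LM_inv, LM_inv, mul_assoc, LM_mul_self, mul_one]
  | one => exact ⟨0, Or.inl (zpow_zero _).symm⟩
  | mul x y hx hy ihx ihy =>
    obtain ⟨m, hm⟩ := ihx
    obtain ⟨k, hk⟩ := ihy
    rcases hm with rfl | rfl <;> rcases hk with rfl | rfl
    · exact ⟨m + k, Or.inl (zpow_add _ _ _).symm⟩
    · exact ⟨m + k, Or.inr (by rw [← mul_assoc, ← zpow_add])⟩
    · refine ⟨m + -k, Or.inr ?_⟩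
      rw [mul_assoc, s_mul_zpow, ← mul_assoc, ← zpow_add]
    · refine ⟨m + -k, Or.inl ?_⟩
      rw [mul_assoc ((LM a * LM b) ^ m) (LM a) _, ← mul_assoc (LM a) _ _, s_mul_zpow,
        mul_assoc, LM_mul_self, mul_one, ← zpow_add]
  | inv x hx ih =>
    obtain ⟨m, hm⟩ := ih
    rcases hm with rfl | rfl
    · exact ⟨-m, Or.inl (by rw [zpow_neg])⟩
    · refine ⟨m, Or.inr ?_⟩
      rw [mul_inv_rev, LM_inv, ← zpow_neg, s_mul_zpow, neg_neg]

lemma exists_zpow_of_superconnected (hsc : Superconnected Q) (a b : Q) :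
    ∃ m : ℤ, ((LM a * LM b) ^ m) a = b := by
  have hconn := hsc (Sg {a, b}) (isSubalg_Sg _)
  have ha : a ∈ Sg {a, b} := subset_Sg _ (by simp)
  have hb : b ∈ Sg {a, b} := subset_Sg _ (by simp)
  obtain ⟨h, hmem, hab⟩ := hconn a ha b hb
  have hD : h ∈ Subgroup.closure ({LM a, LM b} : Set (Equiv.Perm Q)) := by
    have hsub : (LM : Q → Equiv.Perm Q) '' Sg {a, b} ⊆
        ↑(Subgroup.closure ({LM a, LM b} : Set (Equiv.Perm Q))) := by
      rintro x ⟨c, hc, rfl⟩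
      exact LM_mem_of_mem_Sg hc
    exact (Subgroup.closure_le _).mpr hsub hmem
  obtain ⟨m, hm | hm⟩ := dihedral_form hD
  · exact ⟨m, by rw [← hm]; exact hab⟩
  · refine ⟨m, ?_⟩
    calc ((LM a * LM b) ^ m) a = ((LM a * LM b) ^ m) (LM a a) := by rw [LM_self]
      _ = ((LM a * LM b) ^ m * LM a) a := rfl
      _ = h a := by rw [← hm]
      _ = b := hab

/-! ### Latin + finite order implies existence -/

lemma exists_zpow_of_latin (hl : Latin Q) {a b : Q} (hf : IsOfFinOrder (LM a * LM b)) :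
    ∃ m : ℤ, ((LM a * LM b) ^ m) a = b := by
  have hn : 0 < orderOf (LM a * LM b) := hf.orderOf_pos
  let A : Set Q := (fun k : ℕ => ((LM a * LM b) ^ k) a) '' Set.Iio (orderOf (LM a * LM b))
  let B : Set Q := (fun k : ℕ => ((LM a * LM b) ^ k) b) '' Set.Iio (orderOf (LM a * LM b))
  have haA : a ∈ A := by exact ⟨0, hn, by simp⟩
  have hbB : b ∈ B := by exact ⟨0, hn, by simp⟩
  have hmapsA : ∀ x ∈ A ∪ B, LQgrp.mul x a ∈ A := by
    intro x hx
    rcases hx with hx | hx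
    · obtain ⟨k, hk, rfl⟩ := hx
      show LQgrp.mul (((LM a * LM b) ^ k) a) a ∈ A
      rw [mul_tpow_a]
      refine ⟨(2 * k) % orderOf (LM a * LM b), Nat.mod_lt _ hn, ?_⟩
      show ((LM a * LM b) ^ ((2 * k) % orderOf (LM a * LM b))) a = _
      rw [pow_mod_orderOf]
    · obtain ⟨k, hk, rfl⟩ := hx
      show LQgrp.mul (((LM a * LM b) ^ k) b) a ∈ A
      rw [mul_tpow_b]
      have hLb : LM b a = ((LM a * LM b) ^ (orderOf (LM a * LM b) - 1)) a := by
        have h1 : (LM a * LM b) ^ (orderOf (LM a * LM b) - 1) * (LM a * LM b) = 1 := by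
          rw [← pow_succ, (by omega : orderOf (LM a * LM b) - 1 + 1 = orderOf (LM a * LM b)),
            pow_orderOf_eq_one]
        have h2 : (LM a * LM b) ^ (orderOf (LM a * LM b) - 1) = (LM a * LM b)⁻¹ :=
          eq_inv_of_mul_eq_one_left h1
        rw [h2, mul_inv_rev, LM_inv, LM_inv]
        calc LM b a = LM b (LM a a) := by rw [LM_self]
          _ = (LM b * LM a) a := rfl
      rw [hLb]
      have hcomp : ((LM a * LM b) ^ (2 * k)) (((LM a * LM b) ^ (orderOf (LM a * LM b) - 1)) a)
          = ((LM a * LM b) ^ (2 * k + (orderOf (LM a * LM b) - 1))) a := by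
        rw [pow_add]
        rfl
      rw [hcomp]
      refine ⟨(2 * k + (orderOf (LM a * LM b) - 1)) % orderOf (LM a * LM b), Nat.mod_lt _ hn, ?_⟩
      show ((LM a * LM b) ^ ((2 * k + (orderOf (LM a * LM b) - 1)) % orderOf (LM a * LM b))) a = _
      rw [pow_mod_orderOf]
  have hfinAB : (A ∪ B).Finite :=
    Set.Finite.union ((Set.finite_Iio _).image _) ((Set.finite_Iio _).image _)
  have hmaps : Set.MapsTo (fun x => LQgrp.mul x a) (A ∪ B) (A ∪ B) :=
    fun x hx => Or.inl (hmapsA x hx)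
  have hinj : Set.InjOn (fun x => LQgrp.mul x a) (A ∪ B) := ((hl a).1).injOn
  have hbij := (hfinAB.injOn_iff_bijOn_of_mapsTo hmaps).mp hinj
  have hbmem : b ∈ (fun x => LQgrp.mul x a) '' (A ∪ B) := hbij.surjOn (Or.inr hbB)
  obtain ⟨x, hxmem, hxb⟩ := hbmem
  have hxb' : LQgrp.mul x a = b := hxb
  have hbA : b ∈ A := by
    have := hmapsA x hxmem
    rw [hxb'] at this
    exact this
  obtain ⟨k, hk, hkb⟩ := hbA
  refine ⟨(k : ℤ), ?_⟩
  rw [zpow_natCast]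
  exact hkb

/-! ### Clause implies superconnected and latin -/

lemma superconnected_of_clause (h : ∀ a b : Q, clause a b) : Superconnected Q := by
  intro S hS a ha b hb
  obtain ⟨hfin, hodd, hcyc, -⟩ := h a b
  refine ⟨(LM a * LM b) ^ (orderOf (LM a * LM b) / 2), ?_, ?_⟩
  · refine pow_mem (mul_mem (Subgroup.subset_closure ?_) (Subgroup.subset_closure ?_)) _
    · exact ⟨a, ha, rfl⟩
    · exact ⟨b, hb, rfl⟩
  · rw [cyc_odd a b (Nat.odd_iff.mp hodd)] at hcyc
    exact hcyc

lemma latin_of_clause (h : ∀ a b : Q, clause a b) : Latin Q := by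
  intro a
  constructor
  · -- injectivity
    intro x y hxy
    have hxy' : LQgrp.mul x a = LQgrp.mul y a := hxy
    obtain ⟨hfx, hox, hcx, -⟩ := h a x
    obtain ⟨hfy, hoy, hcy, -⟩ := h a y
    rw [cyc_odd a x (Nat.odd_iff.mp hox)] at hcx
    rw [cyc_odd a y (Nat.odd_iff.mp hoy)] at hcy
    have hsq : (LM a * LM x) * (LM a * LM x) = (LM a * LM y) * (LM a * LM y) := by
      have e1 : (LM a * LM x) * (LM a * LM x) = LM a * LM (LQgrp.mul x a) := by
        rw [conj_LM x a, LM_inv]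
        group
      have e2 : (LM a * LM y) * (LM a * LM y) = LM a * LM (LQgrp.mul y a) := by
        rw [conj_LM y a, LM_inv]
        group
      rw [e1, e2, hxy']
    have hgcdx : Nat.gcd (orderOf (LM a * LM x)) 2 = 1 := Nat.coprime_two_right.mpr hox
    have hgcdy : Nat.gcd (orderOf (LM a * LM y)) 2 = 1 := Nat.coprime_two_right.mpr hoy
    have hg2 : orderOf ((LM a * LM x) * (LM a * LM x)) = orderOf (LM a * LM x) := by
      rw [← pow_two, IsOfFinOrder.orderOf_pow _ 2 hfx, hgcdx, Nat.div_one]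
    have hg2' : orderOf ((LM a * LM y) * (LM a * LM y)) = orderOf (LM a * LM y) := by
      rw [← pow_two, IsOfFinOrder.orderOf_pow _ 2 hfy, hgcdy, Nat.div_one]
    have hnn : orderOf (LM a * LM x) = orderOf (LM a * LM y) := by
      rw [← hg2, hsq, hg2']
    have hox' : orderOf (LM a * LM x) % 2 = 1 := Nat.odd_iff.mp hox
    have hoy' : orderOf (LM a * LM y) % 2 = 1 := Nat.odd_iff.mp hoy
    have hrtx : ((LM a * LM x) * (LM a * LM x)) ^ ((orderOf (LM a * LM x) + 1) / 2)
        = LM a * LM x := by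
      rw [← pow_two, ← pow_mul,
        (by omega : 2 * ((orderOf (LM a * LM x) + 1) / 2) = orderOf (LM a * LM x) + 1),
        pow_succ, pow_orderOf_eq_one, one_mul]
    have hrty : ((LM a * LM y) * (LM a * LM y)) ^ ((orderOf (LM a * LM y) + 1) / 2)
        = LM a * LM y := by
      rw [← pow_two, ← pow_mul,
        (by omega : 2 * ((orderOf (LM a * LM y) + 1) / 2) = orderOf (LM a * LM y) + 1),
        pow_succ, pow_orderOf_eq_one, one_mul]
    have hgh : LM a * LM x = LM a * LM y := by
      rw [← hrtx, hsq, hnn, hrty]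
    rw [← hcx, hgh]
    exact hcy
  · -- surjectivity
    intro c
    obtain ⟨hfin, hodd, hcyc, -⟩ := h a c
    obtain ⟨q, hq⟩ := hodd
    rw [cyc_odd a c (by omega : orderOf (LM a * LM c) % 2 = 1),
      (by omega : orderOf (LM a * LM c) / 2 = q)] at hcyc
    refine ⟨((LM a * LM c) ^ (q * (q + 1))) a, ?_⟩
    show LQgrp.mul (((LM a * LM c) ^ (q * (q + 1))) a) a = c
    rw [mul_tpow_a a c (q * (q + 1))]
    have hexp : (LM a * LM c) ^ (2 * (q * (q + 1))) = (LM a * LM c) ^ q := by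
      have he : 2 * (q * (q + 1)) = q + (orderOf (LM a * LM c)) * q := by rw [hq]; ring
      rw [he, pow_add, pow_mul, pow_orderOf_eq_one, one_pow, mul_one]
    rw [hexp]
    exact hcyc

end Stmt18Aux

open Stmt18Aux in
/-- for an involutory quandle the following are equivalent:
(i) superconnected; (ii) latin with all `L_a L_b` of finite order;
(iii) `ord_{a,b} = |L_a L_b|` is finite and odd for all `a,b`. -/
theorem stmt18 {Q : Type*} [InvQdl Q] :
    (Superconnected Q ↔ (Latin Q ∧ ∀ a b : Q, IsOfFinOrder (LM a * LM b))) ∧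
    (Superconnected Q ↔
      ∀ a b : Q, IsOfFinOrder (LM a * LM b) ∧ Odd (orderOf (LM a * LM b)) ∧
        cyc a b (orderOf (LM a * LM b)) = b ∧
        ∀ j : ℕ, 0 < j → cyc a b j = b → orderOf (LM a * LM b) ≤ j) := by
  have h13 : Superconnected Q → ∀ a b : Q, clause a b :=
    fun hsc a b => clause_of_exists (exists_zpow_of_superconnected hsc a b)
  have h31 : (∀ a b : Q, clause a b) → Superconnected Q := superconnected_of_clause
  constructor
  · constructor
    · intro hsc
      exact ⟨latin_of_clause (h13 hsc), fun a b => (h13 hsc a b).1⟩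
    · rintro ⟨hlat, hfin⟩
      exact h31 fun a b => clause_of_exists (exists_zpow_of_latin hlat (hfin a b))
  · exact ⟨h13, h31⟩
end
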